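/- arXiv:2508.01305 — 3 statements merged into one kernel-verified Lean document; each statement's English description precedes it below -/
import Mathlib

section
/- Suppose f : [0,T] × ℝ^m × ℝ^n → ℝ^m and g : [0,T] × ℝ^m × ℝ^n → ℝ^n satisfy the quasi-monotonicity property (M): each f_i is non-decreasing in x_k (k≠i) and in all y_j; each g_j is non-increasing in all x_i and in y_k (k≠j). If (x♭,y♭) and (x♯,y♯) are two supersolutions of the two-point boundary value problem ẋ = f(t,x,y), ẏ = g(t,x,y), x(0) ⪰ x̄, y(T) ⪰ ȳ, then their componentwise pointwise minimum (x,y), defined by x_i(t) = min{x♭_i(t), x♯_i(t)} and y_j(t) = min{y♭_j(t), y♯_j(t)}, is also a supersolution. -/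
open MeasureTheory Set


lemma integral_open_zero {W : Set ℝ} (hW : IsOpen W) {α β : ℝ} (hsub : W ⊆ Ioo α β)
    {d : ℝ → ℝ} (hint : IntegrableOn d W)
    (hcomp : ∀ a b : ℝ, a < b → Ioo a b ⊆ W → a ∉ W → b ∉ W → ∫ s in Ioo a b, d s = 0) :
    ∫ s in W, d s = 0 := by
  classical
  -- enumerate rationals
  set e : ℕ → ℚ := fun n => (Denumerable.eqv ℚ).symm n with he
  have hesurj : Function.Surjective e := (Denumerable.eqv ℚ).symm.surjective
  set c : ℕ → Set ℝ := fun n => connectedComponentIn W ((e n : ℚ) : ℝ) with hc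
  have hcW : ∀ n, c n ⊆ W := fun n => connectedComponentIn_subset _ _
  have hcopen : ∀ n, IsOpen (c n) := fun n => hW.connectedComponentIn
  have hcpre : ∀ n, IsPreconnected (c n) := fun n => isPreconnected_connectedComponentIn
  -- equal or disjoint
  have heqd : ∀ m n : ℕ, (c m ∩ c n).Nonempty → c m = c n := by
    intro m n ⟨y, hym, hyn⟩
    rw [hc]
    simp only
    rw [connectedComponentIn_eq hym, connectedComponentIn_eq hyn]
  -- W is the union of the c n
  have hWU : W = ⋃ n, c n := by
    apply Subset.antisymm
    · intro x hx
      have hopen : IsOpen (connectedComponentIn W x) := hW.connectedComponentIn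
      have hne : (connectedComponentIn W x).Nonempty := ⟨x, mem_connectedComponentIn hx⟩
      obtain ⟨q, hq⟩ := Rat.denseRange_cast.exists_mem_open hopen hne
      obtain ⟨n, hn⟩ := hesurj q
      have : connectedComponentIn W x = c n := by
        rw [hc]; simp only [hn]
        exact connectedComponentIn_eq hq
      exact mem_iUnion.2 ⟨n, this ▸ mem_connectedComponentIn hx⟩
    · exact iUnion_subset hcW
  -- disjointify
  set c' : ℕ → Set ℝ := fun n => c n \ ⋃ k : Fin n, c k with hc'
  have hc'sub : ∀ n, c' n ⊆ c n := fun n => diff_subset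
  have hc'meas : ∀ n, MeasurableSet (c' n) := by
    intro n
    exact ((hcopen n).measurableSet).diff (MeasurableSet.iUnion fun k => (hcopen k).measurableSet)
  have hc'disj : Pairwise (Function.onFun Disjoint c') := by
    intro i j hij
    wlog h : i < j generalizing i j
    · exact (this hij.symm (by omega)).symm
    refine Set.disjoint_left.2 fun x hxi hxj => ?_
    exact hxj.2 (mem_iUnion.2 ⟨⟨i, h⟩, hxi.1⟩)
  have hc'union : (⋃ n, c' n) = W := by
    rw [hWU]
    apply Subset.antisymm (iUnion_subset fun n => (hc'sub n).trans (subset_iUnion c n))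
    intro x hx
    have hex : ∃ n, x ∈ c n := mem_iUnion.1 hx
    obtain ⟨n, hn, hmin⟩ := Nat.find_spec hex, Nat.find_spec hex, fun k (hk : k < Nat.find hex) => Nat.find_min hex hk
    refine mem_iUnion.2 ⟨Nat.find hex, Nat.find_spec hex, ?_⟩
    intro hmem
    obtain ⟨k, hk⟩ := mem_iUnion.1 hmem
    exact Nat.find_min hex k.2 hk
  -- each c' n is either empty or equal to c n
  have hc'cases : ∀ n, c' n = ∅ ∨ c' n = c n := by
    intro n
    by_cases h : ∃ k : Fin n, (c k ∩ c n).Nonempty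
    · obtain ⟨k, hk⟩ := h
      left
      have := heqd k n hk
      rw [hc', eq_empty_iff_forall_notMem]
      intro x hx
      exact hx.2 (mem_iUnion.2 ⟨k, this ▸ hx.1⟩)
    · right
      push_neg at h
      apply Subset.antisymm (hc'sub n)
      intro x hx
      refine ⟨hx, fun hmem => ?_⟩
      obtain ⟨k, hk⟩ := mem_iUnion.1 hmem
      exact eq_empty_iff_forall_notMem.1 (h k) x ⟨hk, hx⟩
  -- integral over each component is zero
  have hczero : ∀ n, (c n).Nonempty → ∫ s in c n, d s = 0 := by
    intro n hne
    have hbdd : BddAbove (c n) := (bddAbove_Ioo).mono ((hcW n).trans hsub)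
    have hbddb : BddBelow (c n) := (bddBelow_Ioo).mono ((hcW n).trans hsub)
    set a := sInf (c n) with ha
    set b := sSup (c n) with hb
    have hIoo : Ioo a b ⊆ c n := by
      intro x hx
      obtain ⟨p, hp, hpx⟩ := exists_lt_of_csInf_lt hne hx.1
      obtain ⟨r, hr, hxr⟩ := exists_lt_of_lt_csSup hne hx.2
      exact ((hcpre n).ordConnected).out hp hr ⟨hpx.le, hxr.le⟩
    have hIcc : c n ⊆ Icc a b := fun x hx => ⟨csInf_le hbddb hx, le_csSup hbdd hx⟩
    have hbnW : b ∉ W := by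
      intro hbW
      have hbcl : b ∈ closure (c n) := csSup_mem_closure hne hbdd
      have hopen : IsOpen (connectedComponentIn W b) := hW.connectedComponentIn
      have hbmem : b ∈ connectedComponentIn W b := mem_connectedComponentIn hbW
      obtain ⟨y, hy1, hy2⟩ := mem_closure_iff.1 hbcl _ hopen hbmem
      have : c n = connectedComponentIn W b := by
        have h1 := heqd n n ⟨y, hy2, hy2⟩
        rw [hc]
        simp only
        rw [connectedComponentIn_eq hy2, ← connectedComponentIn_eq hy1]
      have hbin : b ∈ c n := this ▸ hbmem
      obtain ⟨ε, hε, hball⟩ := Metric.isOpen_iff.1 (hcopen n) b hbin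
      have hd2 : dist (b + ε / 2) b < ε := by
        rw [Real.dist_eq, show b + ε / 2 - b = ε / 2 by ring, abs_of_pos (half_pos hε)]; linarith
      have : b + ε / 2 ∈ c n := hball hd2
      have := le_csSup hbdd this
      linarith
    have hanW : a ∉ W := by
      intro haW
      have hacl : a ∈ closure (c n) := csInf_mem_closure hne hbddb
      have hopen : IsOpen (connectedComponentIn W a) := hW.connectedComponentIn
      have hamem : a ∈ connectedComponentIn W a := mem_connectedComponentIn haW
      obtain ⟨y, hy1, hy2⟩ := mem_closure_iff.1 hacl _ hopen hamem
      have : c n = connectedComponentIn W a := by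
        rw [hc]
        simp only
        rw [connectedComponentIn_eq hy2, ← connectedComponentIn_eq hy1]
      have hain : a ∈ c n := this ▸ hamem
      obtain ⟨ε, hε, hball⟩ := Metric.isOpen_iff.1 (hcopen n) a hain
      have hd2 : dist (a - ε / 2) a < ε := by
        rw [Real.dist_eq, show a - ε / 2 - a = -(ε / 2) by ring, abs_neg, abs_of_pos (half_pos hε)]; linarith
      have : a - ε / 2 ∈ c n := hball hd2
      have := csInf_le hbddb this
      linarith
    have hceq : c n = Ioo a b := by
      apply Subset.antisymm _ hIoo
      intro x hx
      have h1 := hIcc hx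
      have hxa : x ≠ a := fun h => hanW (h ▸ hcW n hx)
      have hxb : x ≠ b := fun h => hbnW (h ▸ hcW n hx)
      exact ⟨lt_of_le_of_ne h1.1 (Ne.symm hxa), lt_of_le_of_ne h1.2 hxb⟩
    have hab : a < b := by
      obtain ⟨x, hx⟩ := hne
      rw [hceq] at hx
      exact hx.1.trans hx.2
    rw [hceq]
    exact hcomp a b hab (hceq ▸ hcW n) hanW hbnW
  have hint' : IntegrableOn d (⋃ n, c' n) := by rw [hc'union]; exact hint
  calc ∫ s in W, d s = ∫ s in ⋃ n, c' n, d s := by rw [hc'union]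
    _ = ∑' n, ∫ s in c' n, d s := integral_iUnion hc'meas hc'disj hint'
    _ = 0 := by
      convert tsum_zero with n
      rcases hc'cases n with h | h
      · simp [h]
      · rw [h]
        rcases eq_empty_or_nonempty (c n) with h2 | h2
        · simp [h2]
        · exact hczero n h2

lemma posPart_primitive {d : ℝ → ℝ} (hd : Integrable d volume) (c : ℝ) {t : ℝ} (ht : 0 ≤ t) :
    max (c + ∫ s in (0:ℝ)..t, d s) 0
      = max c 0 + ∫ s in (0:ℝ)..t,
          ({r : ℝ | 0 < c + ∫ p in (0:ℝ)..r, d p}).indicator d s := by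
  set D : ℝ → ℝ := fun r => c + ∫ p in (0:ℝ)..r, d p with hD
  have hDcont : Continuous D := continuous_const.add (hd.continuous_primitive 0)
  have hD0 : D 0 = c := by simp [hD]
  have hDsub : ∀ x y : ℝ, D y - D x = ∫ p in x..y, d p := by
    intro x y
    have := intervalIntegral.integral_interval_sub_left
      (hd.intervalIntegrable (a := 0) (b := y)) (hd.intervalIntegrable (a := 0) (b := x))
    simp only [hD]
    linarith [this]
  set W₀ : Set ℝ := {r : ℝ | 0 < D r} with hW₀
  have hW₀open : IsOpen W₀ := isOpen_lt continuous_const hDcont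
  have hW₀meas : MeasurableSet W₀ := hW₀open.measurableSet
  set dW : ℝ → ℝ := W₀.indicator d with hdW
  have hdWint : Integrable dW volume := hd.indicator hW₀meas
  have hane : ∀ z : ℝ, ∀ᵐ x : ℝ ∂volume, x ≠ z := by
    intro z
    rw [ae_iff]
    have : {x : ℝ | ¬x ≠ z} = {z} := by ext x; simp
    rw [this]
    exact measure_singleton z
  suffices h : max (D t) 0 = max (D 0) 0 + ∫ s in (0:ℝ)..t, dW s by
    rw [hD0] at h
    exact h
  by_cases hZ : ({r ∈ Icc 0 t | D r ≤ 0} : Set ℝ) = ∅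
  · -- D positive on all of [0, t]
    have hpos : ∀ r ∈ Icc (0:ℝ) t, 0 < D r := by
      intro r hr
      by_contra h
      exact eq_empty_iff_forall_notMem.1 hZ r ⟨hr, not_lt.1 h⟩
    have : ∫ s in (0:ℝ)..t, dW s = ∫ s in (0:ℝ)..t, d s := by
      apply intervalIntegral.integral_congr
      intro s hs
      rw [uIcc_of_le ht] at hs
      exact indicator_of_mem (show s ∈ W₀ from hpos s hs) d
    rw [this]
    have h1 := hpos 0 (left_mem_Icc.2 ht)
    have h2 := hpos t (right_mem_Icc.2 ht)
    rw [max_eq_left h1.le, max_eq_left h2.le]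
    simp [hD]
  · -- Z nonempty
    set Z : Set ℝ := {r ∈ Icc 0 t | D r ≤ 0} with hZdef
    have hZne : Z.Nonempty := nonempty_iff_ne_empty.2 hZ
    have hZclosed : IsClosed Z := by
      have : Z = Icc 0 t ∩ D ⁻¹' (Iic 0) := by ext r; simp [hZdef, and_comm]
      rw [this]
      exact isClosed_Icc.inter (isClosed_Iic.preimage hDcont)
    have hZbddA : BddAbove Z := bddAbove_Icc.mono (fun r hr => hr.1)
    have hZbddB : BddBelow Z := bddBelow_Icc.mono (fun r hr => hr.1)
    set a' := sInf Z with ha'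
    set b' := sSup Z with hb'
    have ha'Z : a' ∈ Z := hZclosed.csInf_mem hZne hZbddB
    have hb'Z : b' ∈ Z := hZclosed.csSup_mem hZne hZbddA
    have ha'b' : a' ≤ b' := csInf_le_csSup hZne hZbddB hZbddA
    have h0a' : 0 ≤ a' := ha'Z.1.1
    have hb't : b' ≤ t := hb'Z.1.2
    have hleft : ∀ r, 0 ≤ r → r < a' → 0 < D r := by
      intro r hr0 hra
      by_contra h
      have hrZ : r ∈ Z := ⟨⟨hr0, hra.le.trans ha'Z.1.2⟩, not_lt.1 h⟩
      exact absurd (csInf_le hZbddB hrZ) (not_le.2 hra)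
    have hright : ∀ r, b' < r → r ≤ t → 0 < D r := by
      intro r hbr hrt
      by_contra h
      have hrZ : r ∈ Z := ⟨⟨h0a'.trans (ha'b'.trans hbr.le), hrt⟩, not_lt.1 h⟩
      exact absurd (le_csSup hZbddA hrZ) (not_le.2 hbr)
    -- integrability of pieces
    have hint1 : IntervalIntegrable dW volume 0 a' := hdWint.intervalIntegrable
    have hint2 : IntervalIntegrable dW volume a' b' := hdWint.intervalIntegrable
    have hint3 : IntervalIntegrable dW volume b' t := hdWint.intervalIntegrable
    have hsplit : ∫ s in (0:ℝ)..t, dW s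
        = (∫ s in (0:ℝ)..a', dW s) + ((∫ s in a'..b', dW s) + (∫ s in b'..t, dW s)) := by
      rw [intervalIntegral.integral_add_adjacent_intervals hint2 hint3,
        intervalIntegral.integral_add_adjacent_intervals hint1 (hint2.trans hint3)]
    -- piece 1
    have hp1 : ∫ s in (0:ℝ)..a', dW s = D a' - c := by
      have : ∫ s in (0:ℝ)..a', dW s = ∫ s in (0:ℝ)..a', d s := by
        apply intervalIntegral.integral_congr_ae
        filter_upwards [hane a'] with s hs hsmem
        rw [uIoc_of_le h0a'] at hsmem
        have h2 : 0 < D s := hleft s hsmem.1.le (lt_of_le_of_ne hsmem.2 hs)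
        exact indicator_of_mem (show s ∈ W₀ from h2) d
      rw [this, ← hDsub 0 a', hD0]
    -- piece 3
    have hp3 : ∫ s in b'..t, dW s = D t - D b' := by
      have : ∫ s in b'..t, dW s = ∫ s in b'..t, d s := by
        apply intervalIntegral.integral_congr_ae
        filter_upwards [hane b'] with s hs hsmem
        rw [uIoc_of_le hb't] at hsmem
        have h2 : 0 < D s := hright s hsmem.1 hsmem.2
        exact indicator_of_mem (show s ∈ W₀ from h2) d
      rw [this, ← hDsub b' t]
    -- piece 2 : zero
    have hp2 : ∫ s in a'..b', dW s = 0 := by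
      rcases eq_or_lt_of_le ha'b' with heq | hlt
      · rw [← heq, intervalIntegral.integral_same]
      rw [intervalIntegral.integral_of_le ha'b', integral_Ioc_eq_integral_Ioo, hdW,
        setIntegral_indicator hW₀meas]
      rw [show Ioo a' b' ∩ W₀ = (W₀ ∩ Ioo a' b') from inter_comm _ _]
      apply integral_open_zero (hW₀open.inter isOpen_Ioo) (inter_subset_right (s := W₀))
        (hd.integrableOn)
      intro a b hab hIoosub haW hbW
      have hIoosub' : Ioo a b ⊆ Ioo a' b' := hIoosub.trans inter_subset_right
      have hbounds := (Ioo_subset_Ioo_iff hab).1 hIoosub'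
      have hba : (0:ℝ) < b - a := by linarith
      -- D a = 0
      have hDa_le : D a ≤ 0 := by
        by_cases haW₀ : a ∈ W₀
        · have haIoo : a ∉ Ioo a' b' := fun hmem => haW ⟨haW₀, hmem⟩
          have : a = a' := by
            rcases eq_or_lt_of_le hbounds.1 with h | h
            · exact h.symm
            · exact absurd ⟨h, lt_of_lt_of_le hab hbounds.2⟩ haIoo
          rw [this]; exact ha'Z.2
        · exact not_lt.1 haW₀
      have hDa_ge : 0 ≤ D a := by
        by_contra h
        push_neg at h
        obtain ⟨δ, hδ, hδ2⟩ := Metric.continuousAt_iff.1 hDcont.continuousAt (-(D a)) (by linarith)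
        have hmin : 0 < min δ (b - a) := lt_min hδ hba
        set x := a + min δ (b - a) / 2 with hx
        have hx1 : x ∈ Ioo a b := by
          constructor
          · simp only [hx]; linarith
          · simp only [hx]
            have h3 : min δ (b - a) ≤ b - a := min_le_right _ _
            linarith
        have hx2 : dist x a < δ := by
          rw [Real.dist_eq, hx, show a + min δ (b - a) / 2 - a = min δ (b - a) / 2 by ring,
            abs_of_pos (by linarith)]
          linarith [min_le_left δ (b - a)]
        have h4 := hδ2 hx2
        rw [Real.dist_eq] at h4
        have hpos : 0 < D x := (hIoosub hx1).1
        have : D x - D a < -(D a) := lt_of_abs_lt h4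
        linarith
      have hDa : D a = 0 := le_antisymm hDa_le hDa_ge
      -- D b = 0
      have hDb_le : D b ≤ 0 := by
        by_cases hbW₀ : b ∈ W₀
        · have hbIoo : b ∉ Ioo a' b' := fun hmem => hbW ⟨hbW₀, hmem⟩
          have : b = b' := by
            rcases eq_or_lt_of_le hbounds.2 with h | h
            · exact h
            · exact absurd ⟨lt_of_le_of_lt hbounds.1 hab, h⟩ hbIoo
          rw [this]; exact hb'Z.2
        · exact not_lt.1 hbW₀
      have hDb_ge : 0 ≤ D b := by
        by_contra h
        push_neg at h
        obtain ⟨δ, hδ, hδ2⟩ := Metric.continuousAt_iff.1 hDcont.continuousAt (-(D b)) (by linarith)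
        have hmin : 0 < min δ (b - a) := lt_min hδ hba
        set x := b - min δ (b - a) / 2 with hx
        have hx1 : x ∈ Ioo a b := by
          constructor
          · simp only [hx]
            have h3 : min δ (b - a) ≤ b - a := min_le_right _ _
            linarith
          · simp only [hx]; linarith
        have hx2 : dist x b < δ := by
          rw [Real.dist_eq, hx, show b - min δ (b - a) / 2 - b = -(min δ (b - a) / 2) by ring,
            abs_neg, abs_of_pos (by linarith)]
          linarith [min_le_left δ (b - a)]
        have h4 := hδ2 hx2
        rw [Real.dist_eq] at h4
        have hpos : 0 < D x := (hIoosub hx1).1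
        have : D x - D b < -(D b) := lt_of_abs_lt h4
        linarith
      have hDb : D b = 0 := le_antisymm hDb_le hDb_ge
      rw [← integral_Ioc_eq_integral_Ioo, ← intervalIntegral.integral_of_le hab.le,
        ← hDsub a b, hDa, hDb, sub_zero]
    -- combine
    have hterm1 : D a' - c = -(max c 0) := by
      rcases eq_or_lt_of_le h0a' with h | h
      · have h1 : D 0 ≤ 0 := by simpa [← h] using ha'Z.2
        rw [hD0] at h1
        rw [← h, hD0, max_eq_right h1]
        ring
      · have hDa'0 : D a' = 0 := by
          apply le_antisymm ha'Z.2
          by_contra hcon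
          push_neg at hcon
          obtain ⟨δ, hδ, hδ2⟩ := Metric.continuousAt_iff.1 hDcont.continuousAt (-(D a'))
            (by linarith)
          have hmin : 0 < min δ a' := lt_min hδ h
          set x := a' - min δ a' / 2 with hx
          have hx1 : 0 ≤ x := by
            simp only [hx]
            linarith [min_le_right δ a']
          have hx2 : x < a' := by simp only [hx]; linarith
          have hx3 : dist x a' < δ := by
            rw [Real.dist_eq, hx, show a' - min δ a' / 2 - a' = -(min δ a' / 2) by ring,
              abs_neg, abs_of_pos (by linarith)]
            linarith [min_le_left δ a']
          have h4 := hδ2 hx3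
          rw [Real.dist_eq] at h4
          have hpos : 0 < D x := hleft x hx1 hx2
          have : D x - D a' < -(D a') := lt_of_abs_lt h4
          linarith
        have hD0pos : 0 < D 0 := hleft 0 le_rfl h
        rw [hD0] at hD0pos
        rw [hDa'0, max_eq_left hD0pos.le]
        ring
    have hterm3 : D t - D b' = max (D t) 0 := by
      rcases eq_or_lt_of_le hb't with h | h
      · have h1 : D t ≤ 0 := by rw [← h]; exact hb'Z.2
        rw [h, max_eq_right h1]
        ring
      · have hDb'0 : D b' = 0 := by
          apply le_antisymm hb'Z.2
          by_contra hcon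
          push_neg at hcon
          obtain ⟨δ, hδ, hδ2⟩ := Metric.continuousAt_iff.1 hDcont.continuousAt (-(D b'))
            (by linarith)
          have hmin : 0 < min δ (t - b') := lt_min hδ (by linarith)
          set x := b' + min δ (t - b') / 2 with hx
          have hx1 : b' < x := by simp only [hx]; linarith
          have hx2 : x ≤ t := by
            simp only [hx]
            linarith [min_le_right δ (t - b')]
          have hx3 : dist x b' < δ := by
            rw [Real.dist_eq, hx, show b' + min δ (t - b') / 2 - b' = min δ (t - b') / 2 by ring,
              abs_of_pos (by linarith)]
            linarith [min_le_left δ (t - b')]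
          have h4 := hδ2 hx3
          rw [Real.dist_eq] at h4
          have hpos : 0 < D x := hright x hx1 hx2
          have : D x - D b' < -(D b') := lt_of_abs_lt h4
          linarith
        have hDtpos : 0 < D t := hright t h le_rfl
        rw [hDb'0, max_eq_left hDtpos.le]
        ring
    rw [hsplit, hp1, hp2, hp3, hD0]
    linarith

lemma min_sub_max (a b : ℝ) : min a b = a - max (a - b) 0 := by
  rcases le_total a b with h | h
  · rw [min_eq_left h, max_eq_right (by linarith : a - b ≤ 0)]; ring
  · rw [min_eq_right h, max_eq_left (by linarith : (0:ℝ) ≤ a - b)]; ring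

lemma min_primitive {T : ℝ} (hT : 0 ≤ T) {u v u' v' : ℝ → ℝ}
    (hu' : IntervalIntegrable u' volume 0 T) (hv' : IntervalIntegrable v' volume 0 T)
    (hu : ∀ t ∈ Icc (0:ℝ) T, u t = u 0 + ∫ s in (0:ℝ)..t, u' s)
    (hv : ∀ t ∈ Icc (0:ℝ) T, v t = v 0 + ∫ s in (0:ℝ)..t, v' s) :
    ∃ w' : ℝ → ℝ, IntervalIntegrable w' volume 0 T ∧
      (∀ t ∈ Icc (0:ℝ) T, min (u t) (v t) = min (u 0) (v 0) + ∫ s in (0:ℝ)..t, w' s) ∧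
      (∀ t ∈ Icc (0:ℝ) T, (u t ≤ v t ∧ w' t = u' t) ∨ (v t ≤ u t ∧ w' t = v' t)) := by
  classical
  set e : ℝ → ℝ := (Ioc (0:ℝ) T).indicator (fun s => u' s - v' s) with he
  have he_int : Integrable e volume :=
    MeasureTheory.IntegrableOn.integrable_indicator (hu'.1.sub hv'.1) measurableSet_Ioc
  set c : ℝ := u 0 - v 0 with hc
  set E : ℝ → ℝ := fun r => c + ∫ p in (0:ℝ)..r, e p with hE
  have hEcont : Continuous E := continuous_const.add (he_int.continuous_primitive 0)
  have hEmeas : MeasurableSet {r : ℝ | 0 < E r} := (isOpen_lt continuous_const hEcont).measurableSet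
  have hsubint : ∀ t ∈ Icc (0:ℝ) T,
      IntervalIntegrable u' volume 0 t ∧ IntervalIntegrable v' volume 0 t := by
    intro t htm
    have hsub : uIcc (0:ℝ) t ⊆ uIcc (0:ℝ) T := by
      rw [uIcc_of_le htm.1, uIcc_of_le hT]
      exact Icc_subset_Icc le_rfl htm.2
    exact ⟨hu'.mono_set hsub, hv'.mono_set hsub⟩
  have hEeq : ∀ t ∈ Icc (0:ℝ) T, E t = u t - v t := by
    intro t htm
    have h1 : ∫ p in (0:ℝ)..t, e p = ∫ p in (0:ℝ)..t, (u' p - v' p) := by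
      apply intervalIntegral.integral_congr_ae
      filter_upwards with s hsmem
      rw [uIoc_of_le htm.1] at hsmem
      exact indicator_of_mem (Ioc_subset_Ioc le_rfl htm.2 hsmem) _
    rw [hE]
    simp only
    rw [h1, intervalIntegral.integral_sub (hsubint t htm).1 (hsubint t htm).2,
      hu t htm, hv t htm, hc]
    ring
  set w' : ℝ → ℝ := fun s => if 0 < E s then v' s else u' s with hw'
  have hw'split : w' = ({r : ℝ | 0 < E r}).indicator v'
      + ({r : ℝ | 0 < E r})ᶜ.indicator u' := by
    funext s
    by_cases h : 0 < E s <;> simp [hw', h, indicator]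
  refine ⟨w', ?_, ?_, ?_⟩
  · constructor
    · rw [hw'split]
      exact (hv'.1.indicator hEmeas).add (hu'.1.indicator hEmeas.compl)
    · rw [Ioc_eq_empty (by linarith : ¬ T < 0)]
      exact integrableOn_empty
  · intro t htm
    have hpp := posPart_primitive he_int c htm.1
    have hEt : E t = c + ∫ s in (0:ℝ)..t, e s := rfl
    have hw'int : ∫ s in (0:ℝ)..t, w' s
        = (∫ s in (0:ℝ)..t, u' s) - ∫ s in (0:ℝ)..t, ({r : ℝ | 0 < E r}).indicator e s := by
      rw [← intervalIntegral.integral_sub (hsubint t htm).1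
        ((he_int.indicator hEmeas).intervalIntegrable)]
      apply intervalIntegral.integral_congr_ae
      filter_upwards with s hsmem
      rw [uIoc_of_le htm.1] at hsmem
      have hes : e s = u' s - v' s := indicator_of_mem (Ioc_subset_Ioc le_rfl htm.2 hsmem) _
      by_cases h : 0 < E s
      · rw [hw']
        simp only [if_pos h, indicator_of_mem (show s ∈ {r : ℝ | 0 < E r} from h), hes]
        ring
      · rw [hw']
        simp only [if_neg h, indicator_of_notMem (show s ∉ {r : ℝ | 0 < E r} from h)]
        ring
    have hm1 := min_sub_max (u t) (v t)
    have hm2 := min_sub_max (u 0) (v 0)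
    have hsets : {r : ℝ | 0 < c + ∫ p in (0:ℝ)..r, e p} = {r : ℝ | 0 < E r} := rfl
    rw [hsets, ← hEt, hEeq t htm, hc] at hpp
    linarith [hu t htm]
  · intro t htm
    by_cases h : 0 < E t
    · right
      have := hEeq t htm
      constructor
      · linarith [hEeq t htm, h]
      · rw [hw']; simp only [if_pos h]
    · left
      constructor
      · have := hEeq t htm
        have h2 : E t ≤ 0 := not_lt.1 h
        linarith
      · rw [hw']; simp only [if_neg h]

lemma coordwise_mono {k : ℕ} (F : (Fin k → ℝ) → ℝ) (s : Finset (Fin k))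
    (hmono : ∀ (z : Fin k → ℝ) (j : Fin k), j ∈ s → Monotone (fun a => F (Function.update z j a)))
    (p q : Fin k → ℝ) (hpq : ∀ j, p j ≤ q j) (hoff : ∀ j ∉ s, p j = q j) : F p ≤ F q := by
  classical
  induction s using Finset.induction_on generalizing p with
  | empty =>
      have hpq' : p = q := funext fun j => hoff j (by simp)
      rw [hpq']
  | @insert a s' ha ih =>
      have h1 : F p ≤ F (Function.update p a (q a)) := by
        have h2 := hmono p a (Finset.mem_insert_self a s') (hpq a)
        simpa [Function.update_eq_self] using h2
      refine h1.trans (ih (fun z j hj => hmono z j (Finset.mem_insert_of_mem hj))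
        (Function.update p a (q a)) (fun j => ?_) (fun j hj => ?_))
      · by_cases hja : j = a
        · subst hja; simp
        · simp [Function.update_of_ne hja]; exact hpq j
      · by_cases hja : j = a
        · subst hja; simp
        · rw [Function.update_of_ne hja]
          exact hoff j (by simp [hja, hj])

/-- A supersolution of the two-point boundary value problem
`ẋ = f(t,x,y)`, `ẏ = g(t,x,y)`, `x(0) ⪰ x̄`, `y(T) ⪰ ȳ`:
an absolutely continuous pair (encoded by an integral representation with an
integrable a.e. derivative) satisfying the differential inequalities a.e. -/
def IsSupersol {m n : ℕ} (T : ℝ)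
    (f : ℝ → (Fin m → ℝ) → (Fin n → ℝ) → Fin m → ℝ)
    (g : ℝ → (Fin m → ℝ) → (Fin n → ℝ) → Fin n → ℝ)
    (xbar : Fin m → ℝ) (ybar : Fin n → ℝ)
    (x : ℝ → Fin m → ℝ) (y : ℝ → Fin n → ℝ) : Prop :=
  ∃ x' : ℝ → Fin m → ℝ, ∃ y' : ℝ → Fin n → ℝ,
    (∀ i, IntervalIntegrable (fun t => x' t i) volume 0 T) ∧
    (∀ j, IntervalIntegrable (fun t => y' t j) volume 0 T) ∧
    (∀ t ∈ Icc (0:ℝ) T, ∀ i, x t i = x 0 i + ∫ s in (0:ℝ)..t, x' s i) ∧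
    (∀ t ∈ Icc (0:ℝ) T, ∀ j, y t j = y 0 j + ∫ s in (0:ℝ)..t, y' s j) ∧
    (∀ i, xbar i ≤ x 0 i) ∧ (∀ j, ybar j ≤ y T j) ∧
    (∀ᵐ t ∂volume, t ∈ Icc (0:ℝ) T →
      (∀ i, f t (x t) (y t) i ≤ x' t i) ∧ (∀ j, y' t j ≤ g t (x t) (y t) j))

/-- under quasi-monotonicity (M), the componentwise pointwise minimum
of two supersolutions is again a supersolution. -/
theorem min_supersol {m n : ℕ} (T : ℝ) (hT : 0 < T)
    (f : ℝ → (Fin m → ℝ) → (Fin n → ℝ) → Fin m → ℝ)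
    (g : ℝ → (Fin m → ℝ) → (Fin n → ℝ) → Fin n → ℝ)
    (hfx : ∀ t x y (i k : Fin m), k ≠ i →
      Monotone (fun s => f t (Function.update x k s) y i))
    (hfy : ∀ t x y (i : Fin m) (j : Fin n),
      Monotone (fun s => f t x (Function.update y j s) i))
    (hgx : ∀ t x y (j : Fin n) (i : Fin m),
      Antitone (fun s => g t (Function.update x i s) y j))
    (hgy : ∀ t x y (j k : Fin n), k ≠ j →
      Antitone (fun s => g t x (Function.update y k s) j))
    (xbar : Fin m → ℝ) (ybar : Fin n → ℝ)
    (xb yb xs ys : _)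
    (h1 : IsSupersol T f g xbar ybar xb yb)
    (h2 : IsSupersol T f g xbar ybar xs ys) :
    IsSupersol T f g xbar ybar
      (fun t i => min (xb t i) (xs t i)) (fun t j => min (yb t j) (ys t j)) := by
  classical
  obtain ⟨xb', yb', hxbI, hybI, hxbR, hybR, hxb0, hybT, hae1⟩ := h1
  obtain ⟨xs', ys', hxsI, hysI, hxsR, hysR, hxs0, hysT, hae2⟩ := h2
  have hT' : (0:ℝ) ≤ T := hT.le
  have hxch : ∀ i : Fin m, ∃ w' : ℝ → ℝ, IntervalIntegrable w' volume 0 T ∧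
      (∀ t ∈ Icc (0:ℝ) T, min (xb t i) (xs t i)
        = min (xb 0 i) (xs 0 i) + ∫ s in (0:ℝ)..t, w' s) ∧
      (∀ t ∈ Icc (0:ℝ) T,
        (xb t i ≤ xs t i ∧ w' t = xb' t i) ∨ (xs t i ≤ xb t i ∧ w' t = xs' t i)) :=
    fun i => min_primitive hT' (hxbI i) (hxsI i)
      (fun t ht => hxbR t ht i) (fun t ht => hxsR t ht i)
  have hych : ∀ j : Fin n, ∃ w' : ℝ → ℝ, IntervalIntegrable w' volume 0 T ∧
      (∀ t ∈ Icc (0:ℝ) T, min (yb t j) (ys t j)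
        = min (yb 0 j) (ys 0 j) + ∫ s in (0:ℝ)..t, w' s) ∧
      (∀ t ∈ Icc (0:ℝ) T,
        (yb t j ≤ ys t j ∧ w' t = yb' t j) ∨ (ys t j ≤ yb t j ∧ w' t = ys' t j)) :=
    fun j => min_primitive hT' (hybI j) (hysI j)
      (fun t ht => hybR t ht j) (fun t ht => hysR t ht j)
  choose wx hwxI hwxR hwxP using hxch
  choose wy hwyI hwyR hwyP using hych
  refine ⟨fun t i => wx i t, fun t j => wy j t, fun i => hwxI i, fun j => hwyI j,
    fun t ht i => hwxR i t ht, fun t ht j => hwyR j t ht,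
    fun i => le_min (hxb0 i) (hxs0 i), fun j => le_min (hybT j) (hysT j), ?_⟩
  filter_upwards [hae1, hae2] with t h1t h2t htm
  set mx : Fin m → ℝ := fun i => min (xb t i) (xs t i) with hmx
  set my : Fin n → ℝ := fun j => min (yb t j) (ys t j) with hmy
  constructor
  · intro i
    show f t mx my i ≤ wx i t
    rcases hwxP i t htm with ⟨hle, heq⟩ | ⟨hle, heq⟩
    · have hA : f t mx my i ≤ f t (xb t) my i := by
        apply coordwise_mono (fun z => f t z my i) (Finset.univ.erase i)
          (fun z j hj => hfx t z my i j (Finset.ne_of_mem_erase hj))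
          mx (xb t) (fun j => min_le_left _ _)
        intro j hj
        have hji : j = i := by
          by_contra hc
          exact hj (Finset.mem_erase.2 ⟨hc, Finset.mem_univ j⟩)
        rw [hji, hmx]
        exact min_eq_left hle
      have hB : f t (xb t) my i ≤ f t (xb t) (yb t) i := by
        apply coordwise_mono (fun z => f t (xb t) z i) Finset.univ
          (fun z j _ => hfy t (xb t) z i j)
          my (yb t) (fun j => min_le_left _ _)
        intro j hj
        exact absurd (Finset.mem_univ j) hj
      rw [heq]
      exact (hA.trans hB).trans ((h1t htm).1 i)
    · have hA : f t mx my i ≤ f t (xs t) my i := by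
        apply coordwise_mono (fun z => f t z my i) (Finset.univ.erase i)
          (fun z j hj => hfx t z my i j (Finset.ne_of_mem_erase hj))
          mx (xs t) (fun j => min_le_right _ _)
        intro j hj
        have hji : j = i := by
          by_contra hc
          exact hj (Finset.mem_erase.2 ⟨hc, Finset.mem_univ j⟩)
        rw [hji, hmx]
        exact min_eq_right hle
      have hB : f t (xs t) my i ≤ f t (xs t) (ys t) i := by
        apply coordwise_mono (fun z => f t (xs t) z i) Finset.univ
          (fun z j _ => hfy t (xs t) z i j)
          my (ys t) (fun j => min_le_right _ _)
        intro j hj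
        exact absurd (Finset.mem_univ j) hj
      rw [heq]
      exact (hA.trans hB).trans ((h2t htm).1 i)
  · intro j
    show wy j t ≤ g t mx my j
    rcases hwyP j t htm with ⟨hle, heq⟩ | ⟨hle, heq⟩
    · have hA : g t (xb t) (yb t) j ≤ g t mx (yb t) j := by
        have h := coordwise_mono (fun z => -(g t z (yb t) j)) Finset.univ
          (fun z i _ a b hab => neg_le_neg (hgx t z (yb t) j i hab))
          mx (xb t) (fun i => min_le_left _ _) (fun i hi => absurd (Finset.mem_univ i) hi)
        have h2 : -(g t mx (yb t) j) ≤ -(g t (xb t) (yb t) j) := h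
        linarith
      have hB : g t mx (yb t) j ≤ g t mx my j := by
        have h := coordwise_mono (fun z => -(g t mx z j)) (Finset.univ.erase j)
          (fun z k hk a b hab => neg_le_neg (hgy t mx z j k (Finset.ne_of_mem_erase hk) hab))
          my (yb t) (fun k => min_le_left _ _) (fun k hk => by
            have hkj : k = j := by
              by_contra hc
              exact hk (Finset.mem_erase.2 ⟨hc, Finset.mem_univ k⟩)
            rw [hkj, hmy]
            exact min_eq_left hle)
        have h2 : -(g t mx my j) ≤ -(g t mx (yb t) j) := h
        linarith
      rw [heq]
      exact (((h1t htm).2 j).trans hA).trans hB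
    · have hA : g t (xs t) (ys t) j ≤ g t mx (ys t) j := by
        have h := coordwise_mono (fun z => -(g t z (ys t) j)) Finset.univ
          (fun z i _ a b hab => neg_le_neg (hgx t z (ys t) j i hab))
          mx (xs t) (fun i => min_le_right _ _) (fun i hi => absurd (Finset.mem_univ i) hi)
        have h2 : -(g t mx (ys t) j) ≤ -(g t (xs t) (ys t) j) := h
        linarith
      have hB : g t mx (ys t) j ≤ g t mx my j := by
        have h := coordwise_mono (fun z => -(g t mx z j)) (Finset.univ.erase j)
          (fun z k hk a b hab => neg_le_neg (hgy t mx z j k (Finset.ne_of_mem_erase hk) hab))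
          my (ys t) (fun k => min_le_right _ _) (fun k hk => by
            have hkj : k = j := by
              by_contra hc
              exact hk (Finset.mem_erase.2 ⟨hc, Finset.mem_univ k⟩)
            rw [hkj, hmy]
            exact min_eq_right hle)
        have h2 : -(g t mx my j) ≤ -(g t mx (ys t) j) := h
        linarith
      rw [heq]
      exact (((h2t htm).2 j).trans hA).trans hB
end

section
/- Let (f,g) satisfy quasi-monotonicity (M). If (x(t),y(t)) is a supersolution of the system ẋ = f(t,x,y), ẏ = g(t,x,y) with boundary data x(0)=x̄, y(T)=ȳ, then the scalar functions 𝐱(t) = min_{1≤i≤m} x_i(t) and 𝐲(t) = min_{1≤j≤n} y_j(t) form a supersolution of the scalar system 𝐱̇ = f_min(t,𝐱,𝐲), 𝐲̇ = g_max(t,𝐱,𝐲) with boundary data 𝐱(0) = min_i x̄_i, 𝐲(T) = min_j ȳ_j. -/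
open MeasureTheory Set

open Filter

lemma chain_rule_AC {T : ℝ} {u u' : ℝ → ℝ} (hu' : Integrable u' volume)
    (hu : ∀ t ∈ Icc (0:ℝ) T, u t = u 0 + ∫ s in (0:ℝ)..t, u' s)
    {φ φd : ℝ → ℝ} {C : ℝ} (hφ : ∀ x, HasDerivAt φ (φd x) x)
    (hφd : Continuous φd) (hC : ∀ x, |φd x| ≤ C) {t : ℝ} (ht : t ∈ Icc (0:ℝ) T) :
    φ (u t) = φ (u 0) + ∫ s in (0:ℝ)..t, φd (u s) * u' s := by
  obtain ⟨ht0, htT⟩ := ht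
  -- approximating sequence
  have hpos : ∀ n : ℕ, (0:ℝ) < 1/(n+1) := fun n => by positivity
  choose g hgcs hgL1 hgc hgint using fun n : ℕ =>
    hu'.exists_hasCompactSupport_integral_sub_le (hpos n)
  set v : ℕ → ℝ → ℝ := fun n s => u 0 + ∫ x in (0:ℝ)..s, g n x with hv
  have hvderiv : ∀ n s, HasDerivAt (v n) (g n s) s := by
    intro n s
    have := (intervalIntegral.integral_hasDerivAt_right
      ((hgc n).intervalIntegrable 0 s)
      ((hgc n).stronglyMeasurableAtFilter volume (nhds s)) (hgc n).continuousAt)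
    exact this.const_add (u 0)
  have hvcont : ∀ n, Continuous (v n) :=
    fun n => continuous_iff_continuousAt.2 fun s => (hvderiv n s).continuousAt
  -- uniform closeness on Icc 0 T
  have hclose : ∀ n, ∀ s ∈ Icc (0:ℝ) T, |v n s - u s| ≤ 1/(n+1) := by
    intro n s hs
    have hint1 : IntervalIntegrable (g n) volume 0 s := (hgc n).intervalIntegrable 0 s
    have hint2 : IntervalIntegrable u' volume 0 s := hu'.intervalIntegrable
    have hsub : v n s - u s = ∫ x in (0:ℝ)..s, (g n x - u' x) := by
      rw [hu s hs, hv]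
      simp only []
      rw [intervalIntegral.integral_sub hint1 hint2]
      ring
    rw [hsub]
    have h1 : |∫ x in (0:ℝ)..s, (g n x - u' x)| ≤ ∫ x in (0:ℝ)..s, |g n x - u' x| :=
      intervalIntegral.abs_integral_le_integral_abs hs.1
    have h2 : (∫ x in (0:ℝ)..s, |g n x - u' x|) ≤ ∫ x, |g n x - u' x| := by
      rw [intervalIntegral.integral_of_le hs.1]
      exact setIntegral_le_integral (((hgint n).sub hu').norm)
        (Eventually.of_forall fun x => abs_nonneg _)
    have h3 : (∫ x, |g n x - u' x|) ≤ 1/(n+1) := by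
      have := hgL1 n
      calc (∫ x, |g n x - u' x|) = ∫ x, ‖u' x - g n x‖ := by
            congr 1; funext x; rw [Real.norm_eq_abs, abs_sub_comm]
        _ ≤ 1/(n+1) := this
    linarith [h1, h2, h3]
  have htend : ∀ s ∈ Icc (0:ℝ) T, Tendsto (fun n => v n s) atTop (nhds (u s)) := by
    intro s hs
    rw [tendsto_iff_dist_tendsto_zero]
    apply squeeze_zero (fun n => dist_nonneg) (fun n => ?_)
      tendsto_one_div_add_atTop_nhds_zero_nat
    rw [Real.dist_eq]
    exact hclose n s hs
  -- per-n identity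
  have hkey : ∀ n, φ (v n t) = φ (u 0) + ∫ s in (0:ℝ)..t, φd (v n s) * g n s := by
    intro n
    have hd : ∀ s ∈ uIcc (0:ℝ) t, HasDerivAt (fun z => φ (v n z)) (φd (v n s) * g n s) s :=
      fun s _ => (hφ (v n s)).comp s (hvderiv n s)
    have hint : IntervalIntegrable (fun s => φd (v n s) * g n s) volume 0 t :=
      ((hφd.comp (hvcont n)).mul (hgc n)).intervalIntegrable 0 t
    have := intervalIntegral.integral_eq_sub_of_hasDerivAt hd hint
    have h0 : v n 0 = u 0 := by simp [hv]
    rw [h0] at this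
    linarith [this]
  -- limits
  have hC0 : 0 ≤ C := le_trans (abs_nonneg _) (hC 0)
  have hL : Tendsto (fun n => φ (v n t)) atTop (nhds (φ (u t))) :=
    ((hφ (u t)).continuousAt.tendsto).comp (htend t ⟨ht0, htT⟩)
  -- RHS limit
  have hmeas_u' : AEStronglyMeasurable u' (volume.restrict (Ioc 0 t)) :=
    hu'.aestronglyMeasurable.restrict
  have hJint : ∀ n, IntegrableOn (fun s => φd (v n s) * u' s) (Ioc 0 t) volume := by
    intro n
    exact (hu'.restrict (s := Ioc 0 t)).bdd_mul
      ((hφd.comp (hvcont n)).aestronglyMeasurable)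
      (c := C) (Eventually.of_forall fun s => by rw [Real.norm_eq_abs]; exact hC _)
  have hIint : ∀ n, IntegrableOn (fun s => φd (v n s) * g n s) (Ioc 0 t) volume :=
    fun n => ((hφd.comp (hvcont n)).mul (hgc n)).integrableOn_Ioc
  have hJtend : Tendsto (fun n => ∫ s in Ioc 0 t, φd (v n s) * u' s) atTop
      (nhds (∫ s in Ioc 0 t, φd (u s) * u' s)) := by
    apply tendsto_integral_of_dominated_convergence (fun s => C * |u' s|)
      (fun n => ((hφd.comp (hvcont n)).aestronglyMeasurable).mul hmeas_u')
      ((hu'.norm.const_mul C).restrict)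
    · intro n
      filter_upwards with s
      simp only [Pi.mul_apply, Function.comp_apply, Real.norm_eq_abs, abs_mul]
      exact mul_le_mul_of_nonneg_right (hC _) (abs_nonneg _)
    · filter_upwards [ae_restrict_mem measurableSet_Ioc] with s hs
      have hsIcc : s ∈ Icc (0:ℝ) T := ⟨hs.1.le, hs.2.trans htT⟩
      exact (Tendsto.comp (hφd.continuousAt.tendsto) (htend s hsIcc)).mul_const (u' s)
  have hdiff : Tendsto (fun n => (∫ s in Ioc 0 t, φd (v n s) * g n s)
      - ∫ s in Ioc 0 t, φd (v n s) * u' s) atTop (nhds 0) := by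
    apply squeeze_zero_norm (fun n => ?_)
      (by simpa only [mul_zero] using tendsto_one_div_add_atTop_nhds_zero_nat.const_mul C)
    rw [← integral_sub (hIint n) (hJint n)]
    calc ‖∫ s in Ioc 0 t, (φd (v n s) * g n s - φd (v n s) * u' s)‖
        ≤ ∫ s in Ioc 0 t, ‖φd (v n s) * g n s - φd (v n s) * u' s‖ :=
          norm_integral_le_integral_norm _
      _ ≤ ∫ s in Ioc 0 t, C * ‖g n s - u' s‖ := by
          apply integral_mono_of_nonneg (Eventually.of_forall fun s => norm_nonneg _)
            (((((hgint n).sub hu').norm).const_mul C).restrict)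
          filter_upwards with s
          rw [← mul_sub, Real.norm_eq_abs, Real.norm_eq_abs, abs_mul]
          exact mul_le_mul_of_nonneg_right (hC _) (abs_nonneg _)
      _ ≤ C * (1/(n+1)) := by
          rw [integral_const_mul]
          apply mul_le_mul_of_nonneg_left _ hC0
          calc (∫ s in Ioc 0 t, ‖g n s - u' s‖) ≤ ∫ s, ‖g n s - u' s‖ :=
                setIntegral_le_integral (((hgint n).sub hu').norm)
                  (Eventually.of_forall fun x => norm_nonneg _)
            _ ≤ 1/(n+1) := by
                calc (∫ s, ‖g n s - u' s‖) = ∫ s, ‖u' s - g n s‖ := by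
                      congr 1; funext s; rw [norm_sub_rev]
                  _ ≤ 1/(n+1) := hgL1 n
  have hItend : Tendsto (fun n => ∫ s in (0:ℝ)..t, φd (v n s) * g n s) atTop
      (nhds (∫ s in (0:ℝ)..t, φd (u s) * u' s)) := by
    have heq : ∀ n, (∫ s in (0:ℝ)..t, φd (v n s) * g n s)
        = ((∫ s in Ioc 0 t, φd (v n s) * g n s) - ∫ s in Ioc 0 t, φd (v n s) * u' s)
          + ∫ s in Ioc 0 t, φd (v n s) * u' s := by
      intro n; rw [intervalIntegral.integral_of_le ht0]; ring
    rw [intervalIntegral.integral_of_le ht0]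
    have := hdiff.add hJtend
    rw [zero_add] at this
    exact this.congr (fun n => (heq n).symm)
  have := hL
  have hR : Tendsto (fun n => φ (u 0) + ∫ s in (0:ℝ)..t, φd (v n s) * g n s) atTop
      (nhds (φ (u 0) + ∫ s in (0:ℝ)..t, φd (u s) * u' s)) := hItend.const_add _
  have hfin := tendsto_nhds_unique (hL.congr (fun n => hkey n)) hR
  exact hfin

noncomputable def rho (x : ℝ) : ℝ := if x < 0 then 0 else if x = 0 then 1/2 else 1

noncomputable def phiA (ε x : ℝ) : ℝ := (Real.sqrt (x^2 + ε^2) + x)/2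
noncomputable def phiD (ε x : ℝ) : ℝ := (x / Real.sqrt (x^2 + ε^2) + 1)/2

lemma sq_add_pos {ε x : ℝ} (hε : ε ≠ 0) : 0 < x^2 + ε^2 := by positivity

lemma sqrt_pos' {ε x : ℝ} (hε : ε ≠ 0) : 0 < Real.sqrt (x^2 + ε^2) :=
  Real.sqrt_pos.2 (sq_add_pos hε)

lemma phiA_hasDeriv {ε : ℝ} (hε : ε ≠ 0) (x : ℝ) : HasDerivAt (phiA ε) (phiD ε x) x := by
  have hne : x^2 + ε^2 ≠ 0 := (sq_add_pos hε).ne'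
  have hinner : HasDerivAt (fun x : ℝ => x^2 + ε^2) (2*x) x := by
    simpa using (hasDerivAt_pow 2 x).add_const (ε^2)
  have hs : HasDerivAt (fun x : ℝ => Real.sqrt (x^2 + ε^2))
      (1 / (2 * Real.sqrt (x^2 + ε^2)) * (2*x)) x :=
    (Real.hasDerivAt_sqrt hne).comp x hinner
  have := ((hs.add (hasDerivAt_id x)).div_const 2)
  refine this.congr_deriv ?_
  have : Real.sqrt (x^2 + ε^2) ≠ 0 := (sqrt_pos' hε).ne'
  unfold phiD
  field_simp

lemma abs_le_sqrt' {ε x : ℝ} : |x| ≤ Real.sqrt (x^2 + ε^2) := by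
  rw [← Real.sqrt_sq_eq_abs]
  exact Real.sqrt_le_sqrt (by nlinarith [sq_nonneg ε])

lemma phiD_bound {ε : ℝ} (hε : ε ≠ 0) (x : ℝ) : |phiD ε x| ≤ 1 := by
  have hs := sqrt_pos' (x := x) hε
  have h1 : |x / Real.sqrt (x^2 + ε^2)| ≤ 1 := by
    rw [abs_div, abs_of_pos hs]
    exact div_le_one_of_le₀ abs_le_sqrt' hs.le
  have := abs_le.1 h1
  unfold phiD
  rw [abs_le]
  constructor <;> [linarith [this.1]; linarith [this.2]]

lemma phiD_cont {ε : ℝ} (hε : ε ≠ 0) : Continuous (phiD ε) := by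
  unfold phiD
  apply Continuous.div_const
  apply Continuous.add _ continuous_const
  exact continuous_id.div
    ((Real.continuous_sqrt).comp (by continuity))
    (fun x => (sqrt_pos' hε).ne')

lemma eps_tendsto : Tendsto (fun n : ℕ => 1/((n:ℝ)+1)) atTop (nhds 0) :=
  tendsto_one_div_add_atTop_nhds_zero_nat

lemma eps_ne (n : ℕ) : (1/((n:ℝ)+1)) ≠ 0 := by positivity

lemma phiA_tendsto (x : ℝ) :
    Tendsto (fun n : ℕ => phiA (1/((n:ℝ)+1)) x) atTop (nhds (max x 0)) := by
  have h1 : Tendsto (fun n : ℕ => x^2 + (1/((n:ℝ)+1))^2) atTop (nhds (x^2)) := by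
    have := (eps_tendsto.pow 2).const_add (x^2)
    simpa using this
  have h2 : Tendsto (fun n : ℕ => Real.sqrt (x^2 + (1/((n:ℝ)+1))^2)) atTop (nhds |x|) := by
    have := (Real.continuous_sqrt.tendsto (x^2)).comp h1
    simpa [Real.sqrt_sq_eq_abs, Function.comp_def] using this
  have h3 := (h2.add_const x).div_const 2
  have hmax : (|x| + x)/2 = max x 0 := by
    rcases le_or_gt x 0 with h | h
    · rw [abs_of_nonpos h, max_eq_right h]; ring
    · rw [abs_of_pos h, max_eq_left h.le]; ring
  rw [hmax] at h3
  exact h3.congr (fun n => rfl)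

lemma phiD_tendsto (x : ℝ) :
    Tendsto (fun n : ℕ => phiD (1/((n:ℝ)+1)) x) atTop (nhds (rho x)) := by
  rcases eq_or_ne x 0 with rfl | hx
  · have : ∀ n : ℕ, phiD (1/((n:ℝ)+1)) 0 = 1/2 := by
      intro n; unfold phiD; rw [zero_div, zero_add]
    rw [show rho 0 = 1/2 by simp [rho]]
    simp only [this]
    exact tendsto_const_nhds
  · have h1 : Tendsto (fun n : ℕ => x^2 + (1/((n:ℝ)+1))^2) atTop (nhds (x^2)) := by
      have := (eps_tendsto.pow 2).const_add (x^2)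
      simpa using this
    have h2 : Tendsto (fun n : ℕ => Real.sqrt (x^2 + (1/((n:ℝ)+1))^2)) atTop (nhds |x|) := by
      have := (Real.continuous_sqrt.tendsto (x^2)).comp h1
      simpa [Real.sqrt_sq_eq_abs, Function.comp_def] using this
    have habs : |x| ≠ 0 := abs_ne_zero.2 hx
    have h3 : Tendsto (fun n : ℕ => x / Real.sqrt (x^2 + (1/((n:ℝ)+1))^2)) atTop
        (nhds (x / |x|)) := (tendsto_const_nhds.div h2 habs)
    have h4 := (h3.add_const 1).div_const 2
    have : (x / |x| + 1)/2 = rho x := by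
      rcases lt_or_gt_of_ne hx with h | h
      · rw [abs_of_neg h, div_neg, div_self hx]; simp [rho, h]
      · rw [abs_of_pos h, div_self hx]
        simp [rho, h, not_lt_of_gt h, ne_of_gt h]
    rw [this] at h4
    exact h4.congr (fun n => rfl)

lemma pos_part_AC {T : ℝ} (hT : 0 ≤ T) {u u' : ℝ → ℝ} (hu' : Integrable u' volume)
    (hu : ∀ t ∈ Icc (0:ℝ) T, u t = u 0 + ∫ s in (0:ℝ)..t, u' s) :
    ∃ w : ℝ → ℝ, Integrable w volume ∧
      (∀ t ∈ Icc (0:ℝ) T, max (u t) 0 = max (u 0) 0 + ∫ s in (0:ℝ)..t, w s) ∧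
      (∀ s ∈ Ioc (0:ℝ) T, w s = rho (u s) * u' s) := by
  classical
  -- continuity of u on Icc 0 T
  have hucont : ContinuousOn u (Icc (0:ℝ) T) := by
    have h1 : Continuous (fun t : ℝ => u 0 + ∫ s in (0:ℝ)..t, u' s) :=
      continuous_const.add (intervalIntegral.continuous_primitive (fun a b => hu'.intervalIntegrable) 0)
    exact h1.continuousOn.congr hu
  have huae : AEMeasurable u (volume.restrict (Ioc 0 T)) :=
    (hucont.mono Ioc_subset_Icc_self).aemeasurable measurableSet_Ioc
  have huaeS : AEStronglyMeasurable u (volume.restrict (Ioc 0 T)) :=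
    huae.aestronglyMeasurable
  have hu'res : AEStronglyMeasurable u' (volume.restrict (Ioc 0 T)) :=
    hu'.aestronglyMeasurable.restrict
  -- measurability of approximants on Ioc 0 T
  have hFmeas : ∀ n : ℕ, AEStronglyMeasurable (fun s => phiD (1/((n:ℝ)+1)) (u s) * u' s)
      (volume.restrict (Ioc 0 T)) := by
    intro n
    exact ((phiD_cont (eps_ne n)).comp_aestronglyMeasurable huaeS).mul hu'res
  -- measurability of the limit
  have hWmeas : AEStronglyMeasurable (fun s => rho (u s) * u' s)
      (volume.restrict (Ioc 0 T)) := by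
    apply aestronglyMeasurable_of_tendsto_ae atTop hFmeas
    filter_upwards with s
    exact (phiD_tendsto (u s)).mul_const (u' s)
  -- w as an indicator
  set w : ℝ → ℝ := (Ioc (0:ℝ) T).indicator (fun s => rho (u s) * u' s) with hw
  have hrho_bd : ∀ x : ℝ, |rho x| ≤ 1 := by
    intro x
    unfold rho
    split_ifs <;> (rw [abs_le]; constructor <;> norm_num)
  have hWint : IntegrableOn (fun s => rho (u s) * u' s) (Ioc 0 T) volume := by
    apply Integrable.mono (hu'.restrict (s := Ioc 0 T)) hWmeas
    filter_upwards with s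
    rw [Real.norm_eq_abs, Real.norm_eq_abs, abs_mul]
    calc |rho (u s)| * |u' s| ≤ 1 * |u' s| :=
          mul_le_mul_of_nonneg_right (hrho_bd _) (abs_nonneg _)
      _ = |u' s| := one_mul _
  have hwint : Integrable w volume := by
    rw [hw, integrable_indicator_iff measurableSet_Ioc]
    exact hWint
  refine ⟨w, hwint, ?_, ?_⟩
  · intro t ht
    obtain ⟨ht0, htT⟩ := ht
    -- per-n identity from the chain rule
    have hkey : ∀ n : ℕ, phiA (1/((n:ℝ)+1)) (u t) = phiA (1/((n:ℝ)+1)) (u 0)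
        + ∫ s in (0:ℝ)..t, phiD (1/((n:ℝ)+1)) (u s) * u' s := by
      intro n
      exact chain_rule_AC hu' hu (phiA_hasDeriv (eps_ne n)) (phiD_cont (eps_ne n))
        (phiD_bound (eps_ne n)) ⟨ht0, htT⟩
    -- limits
    have hL : Tendsto (fun n : ℕ => phiA (1/((n:ℝ)+1)) (u t)) atTop (nhds (max (u t) 0)) :=
      phiA_tendsto (u t)
    have hInt_t : Tendsto (fun n : ℕ => ∫ s in Ioc 0 t, phiD (1/((n:ℝ)+1)) (u s) * u' s) atTop
        (nhds (∫ s in Ioc 0 t, rho (u s) * u' s)) := by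
      apply tendsto_integral_of_dominated_convergence (fun s => |u' s|)
        (fun n => (hFmeas n).mono_measure
          (Measure.restrict_mono (Ioc_subset_Ioc_right htT) le_rfl))
        ((hu'.norm.restrict))
      · intro n
        filter_upwards with s
        rw [Real.norm_eq_abs, abs_mul]
        calc |phiD (1/((n:ℝ)+1)) (u s)| * |u' s| ≤ 1 * |u' s| :=
              mul_le_mul_of_nonneg_right (phiD_bound (eps_ne n) _) (abs_nonneg _)
          _ = |u' s| := one_mul _
      · filter_upwards with s
        exact (phiD_tendsto (u s)).mul_const (u' s)
    have hweq : (∫ s in Ioc 0 t, rho (u s) * u' s) = ∫ s in (0:ℝ)..t, w s := by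
      rw [intervalIntegral.integral_of_le ht0, hw, setIntegral_indicator measurableSet_Ioc,
        inter_eq_left.2 (Ioc_subset_Ioc_right htT)]
    have hR : Tendsto (fun n : ℕ => phiA (1/((n:ℝ)+1)) (u 0)
        + ∫ s in (0:ℝ)..t, phiD (1/((n:ℝ)+1)) (u s) * u' s) atTop
        (nhds (max (u 0) 0 + ∫ s in (0:ℝ)..t, w s)) := by
      apply Tendsto.add (phiA_tendsto (u 0))
      rw [← hweq]
      have : ∀ n : ℕ, (∫ s in (0:ℝ)..t, phiD (1/((n:ℝ)+1)) (u s) * u' s)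
          = ∫ s in Ioc 0 t, phiD (1/((n:ℝ)+1)) (u s) * u' s := by
        intro n; rw [intervalIntegral.integral_of_le ht0]
      exact hInt_t.congr (fun n => (this n).symm)
    exact tendsto_nhds_unique (hL.congr (fun n => hkey n)) hR
  · intro s hs
    rw [hw, indicator_of_mem hs]

lemma min_eq_sub_max (x y : ℝ) : min x y = x - max (x - y) 0 := by
  rcases le_total x y with h | h
  · rw [min_eq_left h, max_eq_right (by linarith)]; ring
  · rw [min_eq_right h, max_eq_left (by linarith)]; ring

lemma min_AC {T : ℝ} (hT : 0 ≤ T) {a b a' b' : ℝ → ℝ}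
    (ha' : Integrable a' volume) (hb' : Integrable b' volume)
    (ha : ∀ t ∈ Icc (0:ℝ) T, a t = a 0 + ∫ s in (0:ℝ)..t, a' s)
    (hb : ∀ t ∈ Icc (0:ℝ) T, b t = b 0 + ∫ s in (0:ℝ)..t, b' s) :
    ∃ d : ℝ → ℝ, Integrable d volume ∧
      (∀ t ∈ Icc (0:ℝ) T, min (a t) (b t) = min (a 0) (b 0) + ∫ s in (0:ℝ)..t, d s) ∧
      (∀ s ∈ Ioc (0:ℝ) T,
        ((a s ≤ b s ∧ a' s ≤ d s) ∨ (b s ≤ a s ∧ b' s ≤ d s)) ∧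
        ((a s ≤ b s ∧ d s ≤ a' s) ∨ (b s ≤ a s ∧ d s ≤ b' s))) := by
  have hu' : Integrable (fun s => a' s - b' s) volume := ha'.sub hb'
  have hu : ∀ t ∈ Icc (0:ℝ) T, a t - b t = (a 0 - b 0) + ∫ s in (0:ℝ)..t, (a' s - b' s) := by
    intro t ht
    rw [ha t ht, hb t ht,
      intervalIntegral.integral_sub ha'.intervalIntegrable hb'.intervalIntegrable]
    ring
  obtain ⟨w, hwint, hwrep, hwval⟩ := pos_part_AC hT (u := fun t => a t - b t) hu' hu
  refine ⟨fun s => a' s - w s, ha'.sub hwint, ?_, ?_⟩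
  · intro t ht
    have h1 := hwrep t ht
    have h2 := ha t ht
    have h3 : (∫ s in (0:ℝ)..t, (a' s - w s))
        = (∫ s in (0:ℝ)..t, a' s) - ∫ s in (0:ℝ)..t, w s :=
      intervalIntegral.integral_sub ha'.intervalIntegrable hwint.intervalIntegrable
    rw [min_eq_sub_max (a t) (b t), min_eq_sub_max (a 0) (b 0)]
    linarith [h1, h2, h3]
  · intro s hs
    have hws := hwval s hs
    rcases lt_trichotomy (a s - b s) 0 with h | h | h
    · have hr : rho (a s - b s) = 0 := by unfold rho; rw [if_pos h]
      rw [hr, zero_mul] at hws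
      exact ⟨Or.inl ⟨by linarith, by show a' s ≤ a' s - w s; linarith⟩,
        Or.inl ⟨by linarith, by show a' s - w s ≤ a' s; linarith⟩⟩
    · have hr : rho (a s - b s) = 1/2 := by unfold rho; rw [if_neg (by linarith), if_pos h]
      rw [hr] at hws
      have hab : a s ≤ b s := by linarith
      have hba : b s ≤ a s := by linarith
      constructor
      · rcases le_total (a' s) (b' s) with hc | hc
        · exact Or.inl ⟨hab, by show a' s ≤ a' s - w s; rw [hws]; linarith⟩
        · exact Or.inr ⟨hba, by show b' s ≤ a' s - w s; rw [hws]; linarith⟩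
      · rcases le_total (a' s) (b' s) with hc | hc
        · exact Or.inr ⟨hba, by show a' s - w s ≤ b' s; rw [hws]; linarith⟩
        · exact Or.inl ⟨hab, by show a' s - w s ≤ a' s; rw [hws]; linarith⟩
    · have hr : rho (a s - b s) = 1 := by
        unfold rho; rw [if_neg (by linarith), if_neg (by linarith)]
      rw [hr, one_mul] at hws
      exact ⟨Or.inr ⟨by linarith, by show b' s ≤ a' s - w s; rw [hws]; linarith⟩,
        Or.inr ⟨by linarith, by show a' s - w s ≤ b' s; rw [hws]; linarith⟩⟩

lemma inf_AC {T : ℝ} (hT : 0 ≤ T) {ι : Type*} [DecidableEq ι] {s : Finset ι} (hs : s.Nonempty)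
    {x x' : ℝ → ι → ℝ}
    (hint : ∀ i ∈ s, Integrable (fun t => x' t i) volume)
    (hrep : ∀ t ∈ Icc (0:ℝ) T, ∀ i ∈ s, x t i = x 0 i + ∫ r in (0:ℝ)..t, x' r i) :
    ∃ d : ℝ → ℝ, Integrable d volume ∧
      (∀ t ∈ Icc (0:ℝ) T, s.inf' hs (x t) = s.inf' hs (x 0) + ∫ r in (0:ℝ)..t, d r) ∧
      (∀ r ∈ Ioc (0:ℝ) T,
        (∃ i ∈ s, x r i = s.inf' hs (x r) ∧ x' r i ≤ d r) ∧
        (∃ i ∈ s, x r i = s.inf' hs (x r) ∧ d r ≤ x' r i)) := by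
  induction hs using Finset.Nonempty.cons_induction with
  | singleton a =>
    refine ⟨fun t => x' t a, hint a (Finset.mem_singleton_self a), ?_, ?_⟩
    · intro t ht
      simpa using hrep t ht a (Finset.mem_singleton_self a)
    · intro r _
      exact ⟨⟨a, Finset.mem_singleton_self a, by simp, le_refl _⟩,
        ⟨a, Finset.mem_singleton_self a, by simp, le_refl _⟩⟩
  | cons a s ha hs ih =>
    obtain ⟨d₀, hd₀int, hd₀rep, hd₀val⟩ := ih
      (fun i hi => hint i (Finset.mem_cons_of_mem hi))
      (fun t ht i hi => hrep t ht i (Finset.mem_cons_of_mem hi))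
    obtain ⟨d, hdint, hdrep, hdval⟩ := min_AC hT
      (a := fun t => x t a) (b := fun t => s.inf' hs (x t))
      (hint a (Finset.mem_cons_self a s)) hd₀int
      (fun t ht => hrep t ht a (Finset.mem_cons_self a s)) hd₀rep
    refine ⟨d, hdint, ?_, ?_⟩
    · intro t ht
      rw [Finset.inf'_cons, Finset.inf'_cons]
      exact hdrep t ht
    · intro r hr
      have hkey := hdval r hr
      have hconsr : (Finset.cons a s ha).inf' (Finset.cons_nonempty ha) (x r)
          = min (x r a) (s.inf' hs (x r)) := by rw [Finset.inf'_cons]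
      constructor
      · rcases hkey.1 with ⟨hle, hd⟩ | ⟨hle, hd⟩
        · exact ⟨a, Finset.mem_cons_self a s, by rw [hconsr, min_eq_left hle], hd⟩
        · obtain ⟨i, hi, hival, hile⟩ := (hd₀val r hr).1
          exact ⟨i, Finset.mem_cons_of_mem hi,
            by rw [hconsr, min_eq_right hle, hival], le_trans hile hd⟩
      · rcases hkey.2 with ⟨hle, hd⟩ | ⟨hle, hd⟩
        · exact ⟨a, Finset.mem_cons_self a s, by rw [hconsr, min_eq_left hle], hd⟩
        · obtain ⟨i, hi, hival, hile⟩ := (hd₀val r hr).2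
          exact ⟨i, Finset.mem_cons_of_mem hi,
            by rw [hconsr, min_eq_right hle, hival], le_trans hd hile⟩

lemma le_of_coordwise_mono {κ : Type*} [DecidableEq κ] (F : (κ → ℝ) → ℝ) :
    ∀ (S : Finset κ) (p q : κ → ℝ),
      (∀ (z : κ → ℝ), ∀ k ∈ S, Monotone (fun c => F (Function.update z k c))) →
      (∀ k, q k ≤ p k) → (∀ k ∉ S, q k = p k) → F q ≤ F p := by
  intro S
  induction S using Finset.induction_on with
  | empty =>
    intro p q _ _ heq
    have : q = p := funext fun k => heq k (Finset.notMem_empty k)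
    rw [this]
  | @insert a S ha ih =>
    intro p q hmono hle heq
    have h1 : F q ≤ F (Function.update p a (q a)) := by
      apply ih (Function.update p a (q a)) q
        (fun z k hk => hmono z k (Finset.mem_insert_of_mem hk))
      · intro k
        rcases eq_or_ne k a with rfl | hk
        · rw [Function.update_self]
        · rw [Function.update_of_ne hk]; exact hle k
      · intro k hk
        rcases eq_or_ne k a with rfl | hkk
        · rw [Function.update_self]
        · rw [Function.update_of_ne hkk]
          refine heq k (fun hmem => hk ?_)
          rcases Finset.mem_insert.1 hmem with h | h
          · exact absurd h hkk
          · exact h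
    have h2 : F (Function.update p a (q a)) ≤ F p := by
      have h3 := hmono p a (Finset.mem_insert_self a S) (hle a)
      simpa [Function.update_eq_self] using h3
    exact h1.trans h2

lemma le_of_coordwise_anti {κ : Type*} [DecidableEq κ] (F : (κ → ℝ) → ℝ)
    (S : Finset κ) (p q : κ → ℝ)
    (hanti : ∀ (z : κ → ℝ), ∀ k ∈ S, Antitone (fun c => F (Function.update z k c)))
    (hle : ∀ k, q k ≤ p k) (heq : ∀ k ∉ S, q k = p k) : F p ≤ F q := by
  have := le_of_coordwise_mono (fun v => -F v) S p q
    (fun z k hk c₁ c₂ hc => neg_le_neg (hanti z k hk hc)) hle heq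
  simpa using this

lemma ciInf_eq_inf'_univ {ι : Type*} [Fintype ι] [Nonempty ι] (f : ι → ℝ) :
    (⨅ i, f i) = Finset.univ.inf' Finset.univ_nonempty f :=
  (Finset.inf'_univ_eq_ciInf f).symm

lemma ciSup_eq_sup'_univ {ι : Type*} [Fintype ι] [Nonempty ι] (f : ι → ℝ) :
    (⨆ i, f i) = Finset.univ.sup' Finset.univ_nonempty f :=
  (Finset.sup'_univ_eq_ciSup f).symm

/-- Supersolution of a scalar two-point boundary value problem
`𝐱̇ = F(t,𝐱,𝐲)`, `𝐲̇ = G(t,𝐱,𝐲)`, `𝐱(0) ≥ xb`, `𝐲(T) ≥ yb`. -/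
def IsSupersol1 (T : ℝ) (F G : ℝ → ℝ → ℝ → ℝ) (xb yb : ℝ) (x y : ℝ → ℝ) : Prop :=
  ∃ x' y' : ℝ → ℝ,
    IntervalIntegrable x' volume 0 T ∧
    IntervalIntegrable y' volume 0 T ∧
    (∀ t ∈ Icc (0:ℝ) T, x t = x 0 + ∫ s in (0:ℝ)..t, x' s) ∧
    (∀ t ∈ Icc (0:ℝ) T, y t = y 0 + ∫ s in (0:ℝ)..t, y' s) ∧
    xb ≤ x 0 ∧ yb ≤ y T ∧
    (∀ᵐ t ∂volume, t ∈ Icc (0:ℝ) T →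
      F t (x t) (y t) ≤ x' t ∧ y' t ≤ G t (x t) (y t))

/-- under quasi-monotonicity (M), the componentwise minima
`𝐱(t) = min_i x_i(t)`, `𝐲(t) = min_j y_j(t)` of a supersolution form a
supersolution of the scalar system driven by `f_min`, `g_max`, with boundary
data `min_i x̄_i`, `min_j ȳ_j`. -/
theorem min_components_supersol_of_scalar_system {m n : ℕ}
    (hm : 0 < m) (hn : 0 < n) (T : ℝ) (hT : 0 < T)
    (f : ℝ → (Fin m → ℝ) → (Fin n → ℝ) → Fin m → ℝ)
    (g : ℝ → (Fin m → ℝ) → (Fin n → ℝ) → Fin n → ℝ)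
    (hfx : ∀ t x y (i k : Fin m), k ≠ i →
      Monotone (fun s => f t (Function.update x k s) y i))
    (hfy : ∀ t x y (i : Fin m) (j : Fin n),
      Monotone (fun s => f t x (Function.update y j s) i))
    (hgx : ∀ t x y (j : Fin n) (i : Fin m),
      Antitone (fun s => g t (Function.update x i s) y j))
    (hgy : ∀ t x y (j k : Fin n), k ≠ j →
      Antitone (fun s => g t x (Function.update y k s) j))
    (xbar : Fin m → ℝ) (ybar : Fin n → ℝ)
    (x : ℝ → Fin m → ℝ) (y : ℝ → Fin n → ℝ)
    (hsup : IsSupersol T f g xbar ybar x y) :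
    IsSupersol1 T
      (fun t s τ => ⨅ i, f t (fun _ => s) (fun _ => τ) i)
      (fun t s τ => ⨆ j, g t (fun _ => s) (fun _ => τ) j)
      (⨅ i, xbar i) (⨅ j, ybar j)
      (fun t => ⨅ i, x t i) (fun t => ⨅ j, y t j) := by
  classical
  haveI : Nonempty (Fin m) := ⟨⟨0, hm⟩⟩
  haveI : Nonempty (Fin n) := ⟨⟨0, hn⟩⟩
  obtain ⟨x', y', hx'int, hy'int, hxrep, hyrep, hxbar, hybar, hae⟩ := hsup
  have hT0 : (0:ℝ) ≤ T := hT.le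
  -- globalized derivatives
  have hX'int : ∀ i, Integrable ((Ioc (0:ℝ) T).indicator (fun s => x' s i)) volume := by
    intro i
    rw [integrable_indicator_iff measurableSet_Ioc]
    exact (intervalIntegrable_iff_integrableOn_Ioc_of_le hT0).1 (hx'int i)
  have hY'int : ∀ j, Integrable ((Ioc (0:ℝ) T).indicator (fun s => y' s j)) volume := by
    intro j
    rw [integrable_indicator_iff measurableSet_Ioc]
    exact (intervalIntegrable_iff_integrableOn_Ioc_of_le hT0).1 (hy'int j)
  have hXint_eq : ∀ t ∈ Icc (0:ℝ) T, ∀ (i : Fin m),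
      (∫ r in (0:ℝ)..t, (Ioc (0:ℝ) T).indicator (fun s => x' s i) r)
        = ∫ r in (0:ℝ)..t, x' r i := by
    intro t ht i
    rw [intervalIntegral.integral_of_le ht.1, intervalIntegral.integral_of_le ht.1,
      setIntegral_indicator measurableSet_Ioc, inter_eq_left.2 (Ioc_subset_Ioc_right ht.2)]
  have hYint_eq : ∀ t ∈ Icc (0:ℝ) T, ∀ (j : Fin n),
      (∫ r in (0:ℝ)..t, (Ioc (0:ℝ) T).indicator (fun s => y' s j) r)
        = ∫ r in (0:ℝ)..t, y' r j := by
    intro t ht j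
    rw [intervalIntegral.integral_of_le ht.1, intervalIntegral.integral_of_le ht.1,
      setIntegral_indicator measurableSet_Ioc, inter_eq_left.2 (Ioc_subset_Ioc_right ht.2)]
  obtain ⟨dx, hdxint, hdxrep, hdxval⟩ := inf_AC hT0 (Finset.univ_nonempty (α := Fin m))
    (x := x) (x' := fun t i => (Ioc (0:ℝ) T).indicator (fun s => x' s i) t)
    (fun i _ => hX'int i)
    (by
      intro t ht i _
      show x t i = x 0 i + ∫ r in (0:ℝ)..t, (Ioc (0:ℝ) T).indicator (fun s => x' s i) r
      rw [hXint_eq t ht i]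
      exact hxrep t ht i)
  obtain ⟨dy, hdyint, hdyrep, hdyval⟩ := inf_AC hT0 (Finset.univ_nonempty (α := Fin n))
    (x := y) (x' := fun t j => (Ioc (0:ℝ) T).indicator (fun s => y' s j) t)
    (fun j _ => hY'int j)
    (by
      intro t ht j _
      show y t j = y 0 j + ∫ r in (0:ℝ)..t, (Ioc (0:ℝ) T).indicator (fun s => y' s j) r
      rw [hYint_eq t ht j]
      exact hyrep t ht j)
  have h0 : ∀ᵐ t : ℝ ∂volume, t ≠ (0:ℝ) := by
    rw [ae_iff]
    simpa using measure_singleton (0:ℝ)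
  refine ⟨dx, dy, hdxint.intervalIntegrable, hdyint.intervalIntegrable, ?_, ?_, ?_, ?_, ?_⟩
  · intro t ht
    show (⨅ i, x t i) = (⨅ i, x 0 i) + ∫ s in (0:ℝ)..t, dx s
    rw [ciInf_eq_inf'_univ, ciInf_eq_inf'_univ]
    exact hdxrep t ht
  · intro t ht
    show (⨅ j, y t j) = (⨅ j, y 0 j) + ∫ s in (0:ℝ)..t, dy s
    rw [ciInf_eq_inf'_univ, ciInf_eq_inf'_univ]
    exact hdyrep t ht
  · show (⨅ i, xbar i) ≤ ⨅ i, x 0 i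
    rw [ciInf_eq_inf'_univ, ciInf_eq_inf'_univ]
    apply Finset.le_inf'
    intro i _
    exact (Finset.inf'_le _ (Finset.mem_univ i)).trans (hxbar i)
  · show (⨅ j, ybar j) ≤ ⨅ j, y T j
    rw [ciInf_eq_inf'_univ, ciInf_eq_inf'_univ]
    apply Finset.le_inf'
    intro j _
    exact (Finset.inf'_le _ (Finset.mem_univ j)).trans (hybar j)
  · filter_upwards [hae, h0] with t htae ht0
    intro htIcc
    have htIoc : t ∈ Ioc (0:ℝ) T := ⟨lt_of_le_of_ne htIcc.1 (Ne.symm ht0), htIcc.2⟩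
    have hxlb : ∀ k, (⨅ i', x t i') ≤ x t k := by
      intro k; rw [ciInf_eq_inf'_univ]; exact Finset.inf'_le _ (Finset.mem_univ k)
    have hylb : ∀ k, (⨅ j', y t j') ≤ y t k := by
      intro k; rw [ciInf_eq_inf'_univ]; exact Finset.inf'_le _ (Finset.mem_univ k)
    obtain ⟨hf_ineq, hg_ineq⟩ := htae htIcc
    constructor
    · -- f_min part
      show (⨅ i, f t (fun _ => ⨅ i', x t i') (fun _ => ⨅ j', y t j') i) ≤ dx t
      obtain ⟨i, -, hieq, hile⟩ := (hdxval t htIoc).1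
      have hix : x t i = ⨅ i', x t i' := by rw [ciInf_eq_inf'_univ]; exact hieq
      have hile' : x' t i ≤ dx t := by
        have h := hile
        have h2 : (Ioc (0:ℝ) T).indicator (fun s => x' s i) t ≤ dx t := h
        rwa [indicator_of_mem htIoc] at h2
      have step1 : f t (fun _ => ⨅ i', x t i') (fun _ => ⨅ j', y t j') i
          ≤ f t (x t) (fun _ => ⨅ j', y t j') i := by
        apply le_of_coordwise_mono (fun v => f t v (fun _ => ⨅ j', y t j') i)
          (Finset.univ.erase i) (x t) (fun _ => ⨅ i', x t i')
        · intro z k hk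
          exact hfx t z _ i k (Finset.ne_of_mem_erase hk)
        · exact hxlb
        · intro k hk
          have hki : k = i := by
            by_contra hc
            exact hk (Finset.mem_erase.2 ⟨hc, Finset.mem_univ k⟩)
          rw [hki]
          exact hix.symm
      have step2 : f t (x t) (fun _ => ⨅ j', y t j') i ≤ f t (x t) (y t) i := by
        apply le_of_coordwise_mono (fun v => f t (x t) v i)
          Finset.univ (y t) (fun _ => ⨅ j', y t j')
        · intro z k _
          exact hfy t (x t) z i k
        · exact hylb
        · intro k hk
          exact absurd (Finset.mem_univ k) hk
      calc (⨅ i', f t (fun _ => ⨅ i', x t i') (fun _ => ⨅ j', y t j') i')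
          ≤ f t (fun _ => ⨅ i', x t i') (fun _ => ⨅ j', y t j') i := by
            rw [ciInf_eq_inf'_univ]; exact Finset.inf'_le _ (Finset.mem_univ i)
        _ ≤ f t (x t) (y t) i := step1.trans step2
        _ ≤ x' t i := hf_ineq i
        _ ≤ dx t := hile'
    · -- g_max part
      show dy t ≤ ⨆ j, g t (fun _ => ⨅ i', x t i') (fun _ => ⨅ j', y t j') j
      obtain ⟨j, -, hjeq, hjle⟩ := (hdyval t htIoc).2
      have hjy : y t j = ⨅ j', y t j' := by rw [ciInf_eq_inf'_univ]; exact hjeq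
      have hjle' : dy t ≤ y' t j := by
        have h2 : dy t ≤ (Ioc (0:ℝ) T).indicator (fun s => y' s j) t := hjle
        rwa [indicator_of_mem htIoc] at h2
      have step1 : g t (x t) (y t) j ≤ g t (fun _ => ⨅ i', x t i') (y t) j := by
        apply le_of_coordwise_anti (fun v => g t v (y t) j)
          Finset.univ (x t) (fun _ => ⨅ i', x t i')
        · intro z k _
          exact hgx t z (y t) j k
        · exact hxlb
        · intro k hk
          exact absurd (Finset.mem_univ k) hk
      have step2 : g t (fun _ => ⨅ i', x t i') (y t) j
          ≤ g t (fun _ => ⨅ i', x t i') (fun _ => ⨅ j', y t j') j := by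
        apply le_of_coordwise_anti (fun v => g t (fun _ => ⨅ i', x t i') v j)
          (Finset.univ.erase j) (y t) (fun _ => ⨅ j', y t j')
        · intro z k hk
          exact hgy t (fun _ => ⨅ i', x t i') z j k (Finset.ne_of_mem_erase hk)
        · exact hylb
        · intro k hk
          have hkj : k = j := by
            by_contra hc
            exact hk (Finset.mem_erase.2 ⟨hc, Finset.mem_univ k⟩)
          rw [hkj]
          exact hjy.symm
      calc dy t ≤ y' t j := hjle'
        _ ≤ g t (x t) (y t) j := hg_ineq j
        _ ≤ g t (fun _ => ⨅ i', x t i') (fun _ => ⨅ j', y t j') j := step1.trans step2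
        _ ≤ ⨆ j', g t (fun _ => ⨅ i', x t i') (fun _ => ⨅ j', y t j') j' := by
            rw [ciSup_eq_sup'_univ]; exact Finset.le_sup' _ (Finset.mem_univ j)
end

section
/- If the family of supersolutions of the scalar boundary value problem 𝐱̇ = f_min(t,𝐱,𝐲), 𝐲̇ = g_max(t,𝐱,𝐲), 𝐱(0) = min_i x̄_i, 𝐲(T) = min_j ȳ_j is uniformly bounded below, then the family of supersolutions of the original vector boundary value problem ẋ = f(t,x,y), ẏ = g(t,x,y), x(0)=x̄, y(T)=ȳ is also uniformly bounded below (componentwise). -/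
open MeasureTheory Set

lemma ae_ne_point (c : ℝ) : ∀ᵐ t : ℝ ∂volume, t ≠ c := by
  have h : {t : ℝ | ¬ t ≠ c} = {c} := by ext t; simp
  rw [MeasureTheory.ae_iff, h]
  exact measure_singleton c

lemma sign_dichotomy_Icc (D : ℝ → ℝ) (hD : Continuous D) (a b : ℝ) (hab : a ≤ b)
    (h : ∀ s ∈ Icc a b, D s ≠ 0) :
    (∀ s ∈ Icc a b, D s < 0) ∨ (∀ s ∈ Icc a b, 0 < D s) := by
  rcases lt_or_gt_of_ne (h a ⟨le_refl _, hab⟩) with ha | ha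
  · left; intro s hs; by_contra hc; push_neg at hc
    obtain ⟨c, hc1, hc2⟩ := intermediate_value_Icc hs.1 hD.continuousOn
      (⟨ha.le, hc⟩ : (0:ℝ) ∈ Icc (D a) (D s))
    exact h c ⟨hc1.1, hc1.2.trans hs.2⟩ hc2
  · right; intro s hs; by_contra hc; push_neg at hc
    obtain ⟨c, hc1, hc2⟩ := intermediate_value_Icc' hs.1 hD.continuousOn
      (⟨hc, ha.le⟩ : (0:ℝ) ∈ Icc (D s) (D a))
    exact h c ⟨hc1.1, hc1.2.trans hs.2⟩ hc2

lemma sign_dichotomy_Ico (D : ℝ → ℝ) (hD : Continuous D) (a b : ℝ) (hab : a < b)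
    (h : ∀ s ∈ Ico a b, D s ≠ 0) :
    (∀ s ∈ Ico a b, D s < 0) ∨ (∀ s ∈ Ico a b, 0 < D s) := by
  rcases lt_or_gt_of_ne (h a ⟨le_refl _, hab⟩) with ha | ha
  · left; intro s hs; by_contra hc; push_neg at hc
    obtain ⟨c, hc1, hc2⟩ := intermediate_value_Icc hs.1 hD.continuousOn
      (⟨ha.le, hc⟩ : (0:ℝ) ∈ Icc (D a) (D s))
    exact h c ⟨hc1.1, lt_of_le_of_lt hc1.2 hs.2⟩ hc2
  · right; intro s hs; by_contra hc; push_neg at hc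
    obtain ⟨c, hc1, hc2⟩ := intermediate_value_Icc' hs.1 hD.continuousOn
      (⟨hc, ha.le⟩ : (0:ℝ) ∈ Icc (D s) (D a))
    exact h c ⟨hc1.1, lt_of_le_of_lt hc1.2 hs.2⟩ hc2

lemma sign_dichotomy_Ioc (D : ℝ → ℝ) (hD : Continuous D) (a b : ℝ) (hab : a < b)
    (h : ∀ s ∈ Ioc a b, D s ≠ 0) :
    (∀ s ∈ Ioc a b, D s < 0) ∨ (∀ s ∈ Ioc a b, 0 < D s) := by
  rcases lt_or_gt_of_ne (h b ⟨hab, le_refl _⟩) with hb | hb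
  · left; intro s hs; by_contra hc; push_neg at hc
    obtain ⟨c, hc1, hc2⟩ := intermediate_value_Icc' hs.2 hD.continuousOn
      (⟨hb.le, hc⟩ : (0:ℝ) ∈ Icc (D b) (D s))
    exact h c ⟨lt_of_lt_of_le hs.1 hc1.1, hc1.2⟩ hc2
  · right; intro s hs; by_contra hc; push_neg at hc
    obtain ⟨c, hc1, hc2⟩ := intermediate_value_Icc hs.2 hD.continuousOn
      (⟨hc, hb.le⟩ : (0:ℝ) ∈ Icc (D s) (D b))
    exact h c ⟨lt_of_lt_of_le hs.1 hc1.1, hc1.2⟩ hc2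

lemma integral_pos_set_eq_zero (δ D : ℝ → ℝ) (hδ : Integrable δ volume) (hD : Continuous D)
    (hinc : ∀ p q : ℝ, D q - D p = ∫ s in p..q, δ s)
    (z1 z2 : ℝ) (h1 : D z1 = 0) (h2 : D z2 = 0) :
    ∫ s in (Ioo z1 z2 ∩ {s | 0 < D s}), δ s = 0 := by
  set P : Set ℝ := Ioo z1 z2 ∩ {s | 0 < D s} with hPdef
  have hPopen : IsOpen P := isOpen_Ioo.inter (isOpen_lt continuous_const hD)
  have hz1P : z1 ∉ P := fun h => lt_irrefl z1 h.1.1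
  have hz2P : z2 ∉ P := fun h => lt_irrefl z2 h.1.2
  set u : ℝ → ℝ := fun q => sSup (Icc z1 q ∩ Pᶜ) with hudef
  set v : ℝ → ℝ := fun q => sInf (Icc q z2 ∩ Pᶜ) with hvdef
  have key : ∀ q ∈ P, (z1 ≤ u q ∧ u q < q ∧ u q ∉ P) ∧ (q < v q ∧ v q ≤ z2 ∧ v q ∉ P) ∧
      Ioo (u q) (v q) ⊆ P ∧ D (u q) = 0 ∧ D (v q) = 0 := by
    intro q hq
    obtain ⟨⟨hq1, hq2⟩, hqD⟩ := hq
    have hLc : IsClosed (Icc z1 q ∩ Pᶜ) := isClosed_Icc.inter hPopen.isClosed_compl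
    have hLne : (Icc z1 q ∩ Pᶜ).Nonempty := ⟨z1, ⟨le_refl _, hq1.le⟩, hz1P⟩
    have hLbdd : BddAbove (Icc z1 q ∩ Pᶜ) := (bddAbove_Icc).mono inter_subset_left
    have huL : u q ∈ Icc z1 q ∩ Pᶜ := hLc.csSup_mem hLne hLbdd
    have hRc : IsClosed (Icc q z2 ∩ Pᶜ) := isClosed_Icc.inter hPopen.isClosed_compl
    have hRne : (Icc q z2 ∩ Pᶜ).Nonempty := ⟨z2, ⟨hq2.le, le_refl _⟩, hz2P⟩
    have hRbdd : BddBelow (Icc q z2 ∩ Pᶜ) := (bddBelow_Icc).mono inter_subset_left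
    have hvR : v q ∈ Icc q z2 ∩ Pᶜ := hRc.csInf_mem hRne hRbdd
    have huq : u q < q := lt_of_le_of_ne huL.1.2 (fun h => huL.2 (by rw [h]; exact ⟨⟨hq1, hq2⟩, hqD⟩))
    have hqv : q < v q := lt_of_le_of_ne hvR.1.1 (fun h => hvR.2 (by rw [← h]; exact ⟨⟨hq1, hq2⟩, hqD⟩))
    have hsub : Ioo (u q) (v q) ⊆ P := by
      intro w hw
      by_contra hwP
      rcases le_or_gt w q with h | h
      · exact absurd (le_csSup hLbdd ⟨⟨le_trans huL.1.1 hw.1.le, h⟩, hwP⟩) (not_le.mpr hw.1)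
      · exact absurd (csInf_le hRbdd ⟨⟨h.le, le_trans hw.2.le hvR.1.2⟩, hwP⟩) (not_le.mpr hw.2)
    have hDu : D (u q) = 0 := by
      have hge : 0 ≤ D (u q) := by
        have hcl : u q ∈ closure (Ioo (u q) (v q)) := by
          rw [closure_Ioo (ne_of_lt (huq.trans hqv))]
          exact ⟨le_refl _, (huq.trans hqv).le⟩
        haveI : (nhdsWithin (u q) (Ioo (u q) (v q))).NeBot :=
          mem_closure_iff_nhdsWithin_neBot.mp hcl
        refine ge_of_tendsto (hD.continuousAt.continuousWithinAt :
          Filter.Tendsto D (nhdsWithin (u q) (Ioo (u q) (v q))) (nhds (D (u q)))) ?_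
        filter_upwards [self_mem_nhdsWithin] with s hs
        exact (hsub hs).2.le
      rcases eq_or_lt_of_le huL.1.1 with h | h
      · rw [← h]; exact h1
      · have : u q ∈ Ioo z1 z2 := ⟨h, huq.trans hq2⟩
        have : ¬ 0 < D (u q) := fun h0 => huL.2 ⟨this, h0⟩
        linarith [hge, not_lt.mp this]
    have hDv : D (v q) = 0 := by
      have hge : 0 ≤ D (v q) := by
        have hcl : v q ∈ closure (Ioo (u q) (v q)) := by
          rw [closure_Ioo (ne_of_lt (huq.trans hqv))]
          exact ⟨(huq.trans hqv).le, le_refl _⟩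
        haveI : (nhdsWithin (v q) (Ioo (u q) (v q))).NeBot :=
          mem_closure_iff_nhdsWithin_neBot.mp hcl
        refine ge_of_tendsto (hD.continuousAt.continuousWithinAt :
          Filter.Tendsto D (nhdsWithin (v q) (Ioo (u q) (v q))) (nhds (D (v q)))) ?_
        filter_upwards [self_mem_nhdsWithin] with s hs
        exact (hsub hs).2.le
      rcases eq_or_lt_of_le hvR.1.2 with h | h
      · rw [h]; exact h2
      · have : v q ∈ Ioo z1 z2 := ⟨hq1.trans hqv, h⟩
        have : ¬ 0 < D (v q) := fun h0 => hvR.2 ⟨this, h0⟩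
        linarith [hge, not_lt.mp this]
    exact ⟨⟨huL.1.1, huq, huL.2⟩, ⟨hqv, hvR.1.2, hvR.2⟩, hsub, hDu, hDv⟩
  have key2 : ∀ q ∈ P, ∀ w ∈ Ioo (u q) (v q), u w = u q ∧ v w = v q := by
    intro q hq w hw
    obtain ⟨⟨huz, huq, huP⟩, ⟨hqv, hvz, hvP⟩, hsub, _, _⟩ := key q hq
    have hwP : w ∈ P := hsub hw
    obtain ⟨⟨huz', huw, huP'⟩, ⟨hwv, hvz', hvP'⟩, hsub', _, _⟩ := key w hwP
    have hLbdd : BddAbove (Icc z1 w ∩ Pᶜ) := (bddAbove_Icc).mono inter_subset_left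
    have hRbdd : BddBelow (Icc w z2 ∩ Pᶜ) := (bddBelow_Icc).mono inter_subset_left
    constructor
    · refine le_antisymm ?_ (le_csSup hLbdd ⟨⟨huz, hw.1.le⟩, huP⟩)
      by_contra hcon
      push_neg at hcon
      exact huP' (hsub ⟨hcon, huw.trans hw.2⟩)
    · refine le_antisymm (csInf_le hRbdd ⟨⟨hw.2.le, hvz⟩, hvP⟩) ?_
      by_contra hcon
      push_neg at hcon
      exact hvP' (hsub ⟨hw.1.trans hwv, hcon⟩)
  set E : Set (ℝ × ℝ) := (fun q : ℚ => ((u q, v q) : ℝ × ℝ)) '' {q : ℚ | (q : ℝ) ∈ P} with hEdef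
  have hEc : E.Countable := (Set.to_countable _).image _
  haveI := hEc.to_subtype
  have hmemE : ∀ e : E, ∃ q : ℝ, q ∈ P ∧ (e : ℝ × ℝ) = (u q, v q) := by
    rintro ⟨e, ⟨q, hq, rfl⟩⟩
    exact ⟨(q : ℝ), hq, rfl⟩
  have hcover : (⋃ e : E, Ioo (e : ℝ × ℝ).1 (e : ℝ × ℝ).2) = P := by
    apply subset_antisymm
    · refine iUnion_subset fun e => ?_
      obtain ⟨q, hq, he⟩ := hmemE e
      rw [he]
      exact (key q hq).2.2.1
    · intro p hp
      obtain ⟨⟨_, hup, _⟩, ⟨hpv, _, _⟩, _, _, _⟩ := key p hp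
      obtain ⟨r, hr1, hr2⟩ := exists_rat_btwn (hup.trans hpv)
      have hrmem : (r : ℝ) ∈ Ioo (u p) (v p) := ⟨hr1, hr2⟩
      have hrP : (r : ℝ) ∈ P := (key p hp).2.2.1 hrmem
      obtain ⟨hur, hvr⟩ := key2 p hp (r : ℝ) hrmem
      refine mem_iUnion.mpr ⟨⟨(u (r : ℝ), v (r : ℝ)), ⟨r, hrP, rfl⟩⟩, ?_⟩
      show p ∈ Ioo (u (r : ℝ)) (v (r : ℝ))
      rw [hur, hvr]
      exact ⟨hup, hpv⟩
  have hdisj : Pairwise (Function.onFun Disjoint fun e : E => Ioo (e : ℝ × ℝ).1 (e : ℝ × ℝ).2) := by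
    intro e e' hne
    rw [Function.onFun]
    by_contra hnd
    obtain ⟨w, hw, hw'⟩ := not_disjoint_iff.mp hnd
    obtain ⟨q, hq, he⟩ := hmemE e
    obtain ⟨q', hq', he'⟩ := hmemE e'
    rw [he] at hw
    rw [he'] at hw'
    obtain ⟨h1', h2'⟩ := key2 q hq w hw
    obtain ⟨h1'', h2''⟩ := key2 q' hq' w hw'
    exact hne (Subtype.ext (by rw [he, he', ← h1', ← h2', h1'', h2'']))
  have hint : IntegrableOn δ (⋃ e : E, Ioo (e : ℝ × ℝ).1 (e : ℝ × ℝ).2) volume :=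
    hδ.integrableOn
  rw [← hcover, MeasureTheory.integral_iUnion (fun e => measurableSet_Ioo) hdisj hint]
  rw [tsum_congr (f := fun e : E => ∫ s in Ioo (e : ℝ × ℝ).1 (e : ℝ × ℝ).2, δ s)
    (g := fun _ => (0 : ℝ)) ?_, tsum_zero]
  intro e
  obtain ⟨q, hq, he⟩ := hmemE e
  beta_reduce
  rw [he]
  obtain ⟨⟨_, huq, _⟩, ⟨hqv, _, _⟩, _, hDu, hDv⟩ := key q hq
  have huv : u q ≤ v q := (huq.trans hqv).le
  have := hinc (u q) (v q)
  rw [intervalIntegral.integral_of_le huv, integral_Ioc_eq_integral_Ioo] at this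
  simp only []
  rw [← this, hDu, hDv]
  ring

lemma pair_min_primitive (A B α β : ℝ → ℝ) (hα : Integrable α volume) (hβ : Integrable β volume)
    (hA : ∀ p q : ℝ, A q - A p = ∫ s in p..q, α s)
    (hB : ∀ p q : ℝ, B q - B p = ∫ s in p..q, β s) :
    ∃ ξ : ℝ → ℝ, Integrable ξ volume ∧
      (∀ p q : ℝ, min (A q) (B q) - min (A p) (B p) = ∫ s in p..q, ξ s) ∧
      (∀ t, (min (A t) (B t) = A t ∧ ξ t = α t) ∨ (min (A t) (B t) = B t ∧ ξ t = β t)) := by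
  classical
  set D : ℝ → ℝ := fun t => A t - B t with hDdef
  set δ : ℝ → ℝ := fun t => α t - β t with hδdef
  have hδint : Integrable δ volume := hα.sub hβ
  have hDinc : ∀ p q : ℝ, D q - D p = ∫ s in p..q, δ s := by
    intro p q
    simp only [hDdef, hδdef]
    rw [intervalIntegral.integral_sub (hα.intervalIntegrable) (hβ.intervalIntegrable),
      ← hA p q, ← hB p q]
    ring
  have hDcont : Continuous D := by
    have h : D = fun t => D 0 + ∫ s in (0:ℝ)..t, δ s := by
      funext t; have := hDinc 0 t; linarith
    rw [h]
    exact continuous_const.add (intervalIntegral.continuous_primitive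
      (fun a b => hδint.intervalIntegrable) 0)
  set ξ : ℝ → ℝ := fun t => if D t ≤ 0 then α t else β t with hξdef
  have hXA : ∀ t, D t ≤ 0 → min (A t) (B t) = A t := by
    intro t ht
    rw [hDdef] at ht; simp only [sub_nonpos] at ht
    exact min_eq_left ht
  have hXB : ∀ t, 0 ≤ D t → min (A t) (B t) = B t := by
    intro t ht
    rw [hDdef] at ht; simp only [sub_nonneg] at ht
    exact min_eq_right ht
  have hsel : ∀ t, (min (A t) (B t) = A t ∧ ξ t = α t) ∨
      (min (A t) (B t) = B t ∧ ξ t = β t) := by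
    intro t
    by_cases h : D t ≤ 0
    · exact Or.inl ⟨hXA t h, if_pos h⟩
    · push_neg at h
      exact Or.inr ⟨hXB t h.le, if_neg (not_le.mpr h)⟩
  have hE : MeasurableSet {t : ℝ | D t ≤ 0} :=
    measurableSet_le hDcont.measurable measurable_const
  have hξint : Integrable ξ volume := by
    have h : ξ = fun t => ({t : ℝ | D t ≤ 0}).indicator α t
        + ({t : ℝ | D t ≤ 0}ᶜ).indicator β t := by
      funext t
      by_cases h : D t ≤ 0
      · rw [hξdef]
        simp only [if_pos h, indicator_of_mem (show t ∈ {t : ℝ | D t ≤ 0} from h),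
          indicator_of_notMem (show t ∉ {t : ℝ | D t ≤ 0}ᶜ by simp [h]), add_zero]
      · rw [hξdef]
        simp only [if_neg h, indicator_of_notMem (show t ∉ {t : ℝ | D t ≤ 0} from h),
          indicator_of_mem (show t ∈ {t : ℝ | D t ≤ 0}ᶜ by simp [h]), zero_add]
    rw [h]
    exact (hα.indicator hE).add (hβ.indicator hE.compl)
  refine ⟨ξ, hξint, ?_, hsel⟩
  have main : ∀ p q : ℝ, p ≤ q →
      min (A q) (B q) - min (A p) (B p) = ∫ s in p..q, ξ s := by
    intro p q hpq
    have segA : ∀ a b : ℝ, a ≤ b → (∀ s ∈ Icc a b, D s ≤ 0) →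
        min (A b) (B b) - min (A a) (B a) = ∫ s in a..b, ξ s := by
      intro a b hab hneg
      have h : ∫ s in a..b, ξ s = ∫ s in a..b, α s := by
        apply intervalIntegral.integral_congr
        intro s hs
        rw [uIcc_of_le hab] at hs
        exact if_pos (hneg s hs)
      rw [h, ← hA a b, hXA a (hneg a ⟨le_refl _, hab⟩), hXA b (hneg b ⟨hab, le_refl _⟩)]
    have segB : ∀ a b : ℝ, a ≤ b → (∀ s ∈ Ioo a b, 0 < D s) → 0 ≤ D a → 0 ≤ D b →
        min (A b) (B b) - min (A a) (B a) = ∫ s in a..b, ξ s := by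
      intro a b hab hpos ha hb
      have h : ∫ s in a..b, ξ s = ∫ s in a..b, β s := by
        apply intervalIntegral.integral_congr_ae
        filter_upwards [ae_ne_point b] with s hsb hs
        rw [uIoc_of_le hab] at hs
        exact if_neg (not_le.mpr (hpos s ⟨hs.1, lt_of_le_of_ne hs.2 hsb⟩))
      rw [h, ← hB a b, hXB a ha, hXB b hb]
    set Z : Set ℝ := Icc p q ∩ D ⁻¹' {0} with hZdef
    have hZc : IsClosed Z := isClosed_Icc.inter (isClosed_singleton.preimage hDcont)
    rcases eq_empty_or_nonempty Z with hZ | hZ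
    · have hno : ∀ s ∈ Icc p q, D s ≠ 0 := by
        intro s hs h0
        have : s ∈ Z := ⟨hs, by simpa using h0⟩
        rw [hZ] at this
        exact notMem_empty s this
      rcases sign_dichotomy_Icc D hDcont p q hpq hno with h | h
      · exact segA p q hpq (fun s hs => (h s hs).le)
      · exact segB p q hpq (fun s hs => h s ⟨hs.1.le, hs.2.le⟩)
          (h p ⟨le_refl _, hpq⟩).le (h q ⟨hpq, le_refl _⟩).le
    · have hZbddA : BddAbove Z := bddAbove_Icc.mono inter_subset_left
      have hZbddB : BddBelow Z := bddBelow_Icc.mono inter_subset_left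
      set z1 := sInf Z with hz1def
      set z2 := sSup Z with hz2def
      have hz1 : z1 ∈ Z := hZc.csInf_mem hZ hZbddB
      have hz2 : z2 ∈ Z := hZc.csSup_mem hZ hZbddA
      have hD1 : D z1 = 0 := by simpa using hz1.2
      have hD2 : D z2 = 0 := by simpa using hz2.2
      have hpz1 : p ≤ z1 := hz1.1.1
      have hz2q : z2 ≤ q := hz2.1.2
      have hz12 : z1 ≤ z2 := csInf_le_csSup hZ hZbddB hZbddA
      have hseg1 : min (A z1) (B z1) - min (A p) (B p) = ∫ s in p..z1, ξ s := by
        rcases eq_or_lt_of_le hpz1 with h | h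
        · rw [← h, intervalIntegral.integral_same, sub_self]
        · have hno : ∀ s ∈ Ico p z1, D s ≠ 0 := by
            intro s hs h0
            have : s ∈ Z := ⟨⟨hs.1, hs.2.le.trans hz1.1.2⟩, by simpa using h0⟩
            exact absurd (csInf_le hZbddB this) (not_le.mpr hs.2)
          rcases sign_dichotomy_Ico D hDcont p z1 h hno with hsg | hsg
          · apply segA p z1 hpz1
            intro s hs
            rcases eq_or_lt_of_le hs.2 with h' | h'
            · rw [h']; exact le_of_eq hD1
            · exact (hsg s ⟨hs.1, h'⟩).le
          · exact segB p z1 hpz1 (fun s hs => hsg s ⟨hs.1.le, hs.2⟩)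
              (hsg p ⟨le_refl _, h⟩).le (le_of_eq hD1.symm)
      have hseg3 : min (A q) (B q) - min (A z2) (B z2) = ∫ s in z2..q, ξ s := by
        rcases eq_or_lt_of_le hz2q with h | h
        · rw [h, intervalIntegral.integral_same, sub_self]
        · have hno : ∀ s ∈ Ioc z2 q, D s ≠ 0 := by
            intro s hs h0
            have : s ∈ Z := ⟨⟨hz2.1.1.trans hs.1.le, hs.2⟩, by simpa using h0⟩
            exact absurd (le_csSup hZbddA this) (not_le.mpr hs.1)
          rcases sign_dichotomy_Ioc D hDcont z2 q h hno with hsg | hsg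
          · apply segA z2 q hz2q
            intro s hs
            rcases eq_or_lt_of_le hs.1 with h' | h'
            · rw [← h']; exact le_of_eq hD2
            · exact (hsg s ⟨h', hs.2⟩).le
          · exact segB z2 q hz2q (fun s hs => hsg s ⟨hs.1, hs.2.le⟩)
              (le_of_eq hD2.symm) (hsg q ⟨h, le_refl _⟩).le
      have hseg2 : min (A z2) (B z2) - min (A z1) (B z1) = ∫ s in z1..z2, ξ s := by
        have hXz1 : min (A z1) (B z1) = A z1 := hXA z1 (le_of_eq hD1)
        have hXz2 : min (A z2) (B z2) = A z2 := hXA z2 (le_of_eq hD2)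
        set η : ℝ → ℝ := ({s : ℝ | 0 < D s}).indicator δ with hηdef
        have hU : MeasurableSet {s : ℝ | 0 < D s} :=
          (isOpen_lt continuous_const hDcont).measurableSet
        have hηint : Integrable η volume := hδint.indicator hU
        have hξαη : ∀ s, ξ s = α s - η s := by
          intro s
          by_cases h : D s ≤ 0
          · rw [hξdef]
            simp only [if_pos h, hηdef,
              indicator_of_notMem (show s ∉ {s : ℝ | 0 < D s} by simp; linarith)]
            ring
          · push_neg at h
            rw [hξdef]
            simp only [if_neg (not_le.mpr h), hηdef,
              indicator_of_mem (show s ∈ {s : ℝ | 0 < D s} from h), hδdef]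
            ring
        have h1 : ∫ s in z1..z2, ξ s = (∫ s in z1..z2, α s) - ∫ s in z1..z2, η s := by
          rw [← intervalIntegral.integral_sub (hα.intervalIntegrable)
            (hηint.intervalIntegrable)]
          apply intervalIntegral.integral_congr
          intro s _
          exact hξαη s
        have h2 : ∫ s in z1..z2, η s = 0 := by
          rw [intervalIntegral.integral_of_le hz12, integral_Ioc_eq_integral_Ioo, hηdef,
            MeasureTheory.integral_indicator hU, MeasureTheory.Measure.restrict_restrict hU,
            inter_comm]
          exact integral_pos_set_eq_zero δ D hδint hDcont hDinc z1 z2 hD1 hD2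
        rw [h1, h2, ← hA z1 z2, hXz1, hXz2]
        ring
      rw [← intervalIntegral.integral_add_adjacent_intervals (hξint.intervalIntegrable)
        (hξint.intervalIntegrable),
        ← intervalIntegral.integral_add_adjacent_intervals (hξint.intervalIntegrable)
        (hξint.intervalIntegrable)]
      linarith [hseg1, hseg2, hseg3]
  intro p q
  rcases le_total p q with h | h
  · exact main p q h
  · have h2 := main q p h
    rw [intervalIntegral.integral_symm]
    linarith

lemma finset_min_primitive {m : ℕ} (A : Fin m → ℝ → ℝ) (α : Fin m → ℝ → ℝ)
    (hα : ∀ i, Integrable (α i) volume)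
    (hA : ∀ i, ∀ p q : ℝ, A i q - A i p = ∫ s in p..q, α i s)
    (s : Finset (Fin m)) (hs : s.Nonempty) :
    ∃ Ξ : ℝ → ℝ, Integrable Ξ volume ∧
      (∀ p q : ℝ, (s.inf' hs fun i => A i q) - (s.inf' hs fun i => A i p) = ∫ t in p..q, Ξ t) ∧
      (∀ t, ∃ i ∈ s, (s.inf' hs fun i => A i t) = A i t ∧ Ξ t = α i t) := by
  induction hs using Finset.Nonempty.cons_induction with
  | singleton a =>
    refine ⟨α a, hα a, ?_, ?_⟩
    · intro p q; simpa using hA a p q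
    · intro t; exact ⟨a, Finset.mem_singleton_self a, by simp, rfl⟩
  | cons a s ha hs ih =>
    obtain ⟨Ξ, hΞint, hΞid, hΞsel⟩ := ih
    obtain ⟨ξ, hξint, hξid, hξsel⟩ := pair_min_primitive (A a)
      (fun t => s.inf' hs fun i => A i t) (α a) Ξ (hα a) hΞint (hA a) hΞid
    refine ⟨ξ, hξint, ?_, ?_⟩
    · intro p q
      rw [Finset.inf'_cons (H := hs), Finset.inf'_cons (H := hs)]
      exact hξid p q
    · intro t
      have hc : ((Finset.cons a s ha).inf' (Finset.cons_nonempty ha) fun i => A i t)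
          = min (A a t) (s.inf' hs fun i => A i t) := by
        rw [Finset.inf'_cons (H := hs)]
      rcases hξsel t with ⟨h1, h2⟩ | ⟨h1, h2⟩
      · exact ⟨a, Finset.mem_cons_self a s, by rw [hc, h1], h2⟩
      · obtain ⟨i, hi, hAi, hαi⟩ := hΞsel t
        exact ⟨i, Finset.mem_cons_of_mem hi, by rw [hc, h1, hAi], by rw [h2, hαi]⟩

lemma update_mono {ι : Type*} [DecidableEq ι] (F : (ι → ℝ) → ℝ) :
    ∀ s : Finset ι,
      (∀ (w : ι → ℝ) (k : ι), k ∈ s → Monotone fun a => F (Function.update w k a)) →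
      ∀ u v : ι → ℝ, (∀ k, u k ≤ v k) → (∀ k, k ∉ s → u k = v k) → F u ≤ F v := by
  intro s
  induction s using Finset.induction_on with
  | empty =>
    intro _ u v _ hoff
    have : u = v := funext fun k => hoff k (Finset.notMem_empty k)
    rw [this]
  | @insert k s hks ih =>
    intro hm u v hle hoff
    have h1 : F u ≤ F (Function.update u k (v k)) := by
      have h := (hm u k (Finset.mem_insert_self k s)) (hle k)
      simpa [Function.update_eq_self] using h
    refine le_trans h1 (ih (fun w k' hk' => hm w k' (Finset.mem_insert_of_mem hk')) _ _ ?_ ?_)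
    · intro k'
      by_cases h : k' = k
      · subst h; simp
      · rw [Function.update_of_ne h]; exact hle k'
    · intro k' hk'
      by_cases h : k' = k
      · subst h; simp
      · rw [Function.update_of_ne h]
        exact hoff k' (by simp [Finset.mem_insert, h, hk'])

lemma indicator_primitive_eq (h : ℝ → ℝ) (T t : ℝ) (h0 : 0 ≤ t) (hT : t ≤ T) :
    ∫ s in (0:ℝ)..t, (Ioc (0:ℝ) T).indicator h s = ∫ s in (0:ℝ)..t, h s := by
  rw [intervalIntegral.integral_of_le h0, intervalIntegral.integral_of_le h0,
    MeasureTheory.integral_indicator measurableSet_Ioc,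
    MeasureTheory.Measure.restrict_restrict measurableSet_Ioc]
  congr 1
  rw [Set.Ioc_inter_Ioc]
  simp [min_eq_right hT]

/-- if the supersolutions of the scalar problem driven by
`f_min, g_max` (with boundary data `min_i x̄_i`, `min_j ȳ_j`) are uniformly
bounded below, then so are (componentwise) the supersolutions of the original
vector problem. -/
theorem vector_supersols_bounded_below_of_scalar {m n : ℕ}
    (hm : 0 < m) (hn : 0 < n) (T : ℝ) (hT : 0 < T)
    (f : ℝ → (Fin m → ℝ) → (Fin n → ℝ) → Fin m → ℝ)
    (g : ℝ → (Fin m → ℝ) → (Fin n → ℝ) → Fin n → ℝ)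
    (hfx : ∀ t x y (i k : Fin m), k ≠ i →
      Monotone (fun s => f t (Function.update x k s) y i))
    (hfy : ∀ t x y (i : Fin m) (j : Fin n),
      Monotone (fun s => f t x (Function.update y j s) i))
    (hgx : ∀ t x y (j : Fin n) (i : Fin m),
      Antitone (fun s => g t (Function.update x i s) y j))
    (hgy : ∀ t x y (j k : Fin n), k ≠ j →
      Antitone (fun s => g t x (Function.update y k s) j))
    (xbar : Fin m → ℝ) (ybar : Fin n → ℝ)
    (hscalar : ∃ C : ℝ, ∀ X Y : ℝ → ℝ,
      IsSupersol1 T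
        (fun t s τ => ⨅ i, f t (fun _ => s) (fun _ => τ) i)
        (fun t s τ => ⨆ j, g t (fun _ => s) (fun _ => τ) j)
        (⨅ i, xbar i) (⨅ j, ybar j) X Y →
      ∀ t ∈ Icc (0:ℝ) T, C ≤ X t ∧ C ≤ Y t) :
    ∃ C : ℝ, ∀ x y, IsSupersol T f g xbar ybar x y →
      ∀ t ∈ Icc (0:ℝ) T, (∀ i, C ≤ x t i) ∧ (∀ j, C ≤ y t j) := by
  classical
  obtain ⟨C, hC⟩ := hscalar
  refine ⟨C, ?_⟩
  rintro x y ⟨x', y', hx'int, hy'int, hxrep, hyrep, hx0, hyT, hae⟩ t ht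
  haveI : Nonempty (Fin m) := ⟨⟨0, hm⟩⟩
  haveI : Nonempty (Fin n) := ⟨⟨0, hn⟩⟩
  -- globalized derivatives and primitives
  set αf : Fin m → ℝ → ℝ := fun i => (Ioc (0:ℝ) T).indicator (fun s => x' s i) with hαdef
  set βf : Fin n → ℝ → ℝ := fun j => (Ioc (0:ℝ) T).indicator (fun s => y' s j) with hβdef
  have hαint : ∀ i, Integrable (αf i) volume := fun i =>
    (integrable_indicator_iff measurableSet_Ioc).mpr (hx'int i).1
  have hβint : ∀ j, Integrable (βf j) volume := fun j =>
    (integrable_indicator_iff measurableSet_Ioc).mpr (hy'int j).1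
  set Af : Fin m → ℝ → ℝ := fun i u => x 0 i + ∫ s in (0:ℝ)..u, αf i s with hAdef
  set Bf : Fin n → ℝ → ℝ := fun j u => y 0 j + ∫ s in (0:ℝ)..u, βf j s with hBdef
  have hAinc : ∀ i, ∀ p q : ℝ, Af i q - Af i p = ∫ s in p..q, αf i s := by
    intro i p q
    have h := intervalIntegral.integral_add_adjacent_intervals
      ((hαint i).intervalIntegrable (a := 0) (b := p))
      ((hαint i).intervalIntegrable (a := p) (b := q))
    simp only [hAdef]
    linarith
  have hBinc : ∀ j, ∀ p q : ℝ, Bf j q - Bf j p = ∫ s in p..q, βf j s := by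
    intro j p q
    have h := intervalIntegral.integral_add_adjacent_intervals
      ((hβint j).intervalIntegrable (a := 0) (b := p))
      ((hβint j).intervalIntegrable (a := p) (b := q))
    simp only [hBdef]
    linarith
  have hAeq : ∀ i, ∀ u, u ∈ Icc (0:ℝ) T → Af i u = x u i := by
    intro i u hu
    simp only [hAdef, hαdef]
    rw [indicator_primitive_eq _ T u hu.1 hu.2]
    exact (hxrep u hu i).symm
  have hBeq : ∀ j, ∀ u, u ∈ Icc (0:ℝ) T → Bf j u = y u j := by
    intro j u hu
    simp only [hBdef, hβdef]
    rw [indicator_primitive_eq _ T u hu.1 hu.2]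
    exact (hyrep u hu j).symm
  obtain ⟨Ξ, hΞint, hΞid, hΞsel⟩ :=
    finset_min_primitive Af αf hαint hAinc Finset.univ Finset.univ_nonempty
  obtain ⟨Υ, hΥint, hΥid, hΥsel⟩ :=
    finset_min_primitive Bf βf hβint hBinc Finset.univ Finset.univ_nonempty
  -- quasimonotonicity helpers
  have hfmono : ∀ (tt : ℝ) (u v : Fin m → ℝ) (w z : Fin n → ℝ) (i₀ : Fin m),
      (∀ k, u k ≤ v k) → u i₀ = v i₀ → (∀ j, w j ≤ z j) → f tt u w i₀ ≤ f tt v z i₀ := by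
    intro tt u v w z i₀ huv hui hwz
    have step1 : f tt u w i₀ ≤ f tt u z i₀ :=
      update_mono (fun w' => f tt u w' i₀) Finset.univ
        (fun w' k _ => hfy tt u w' i₀ k) w z hwz
        (fun k hk => absurd (Finset.mem_univ k) hk)
    have step2 : f tt u z i₀ ≤ f tt v z i₀ :=
      update_mono (fun u' => f tt u' z i₀) (Finset.univ.erase i₀)
        (fun u' k hk => hfx tt u' z i₀ k (Finset.ne_of_mem_erase hk)) u v huv
        (fun k hk => by
          have hki : k = i₀ := by
            by_contra hne
            exact hk (Finset.mem_erase.mpr ⟨hne, Finset.mem_univ k⟩)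
          rw [hki]; exact hui)
    exact le_trans step1 step2
  have hgmono : ∀ (tt : ℝ) (u v : Fin m → ℝ) (w z : Fin n → ℝ) (j₀ : Fin n),
      (∀ k, u k ≤ v k) → (∀ j, w j ≤ z j) → w j₀ = z j₀ → g tt v z j₀ ≤ g tt u w j₀ := by
    intro tt u v w z j₀ huv hwz hwj
    have step1 : -(g tt u w j₀) ≤ -(g tt u z j₀) :=
      update_mono (fun w' => -(g tt u w' j₀)) (Finset.univ.erase j₀)
        (fun w' k hk a b hab => by
          simp only [neg_le_neg_iff]
          exact hgy tt u w' j₀ k (Finset.ne_of_mem_erase hk) hab)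
        w z hwz
        (fun k hk => by
          have hkj : k = j₀ := by
            by_contra hne
            exact hk (Finset.mem_erase.mpr ⟨hne, Finset.mem_univ k⟩)
          rw [hkj]; exact hwj)
    have step2 : -(g tt u z j₀) ≤ -(g tt v z j₀) :=
      update_mono (fun u' => -(g tt u' z j₀)) Finset.univ
        (fun u' k _ a b hab => by
          simp only [neg_le_neg_iff]
          exact hgx tt u' z j₀ k hab)
        u v huv (fun k hk => absurd (Finset.mem_univ k) hk)
    linarith
  -- the scalar supersolution
  have hsup1 : IsSupersol1 T
      (fun t s τ => ⨅ i, f t (fun _ => s) (fun _ => τ) i)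
      (fun t s τ => ⨆ j, g t (fun _ => s) (fun _ => τ) j)
      (⨅ i, xbar i) (⨅ j, ybar j)
      (fun u => Finset.univ.inf' Finset.univ_nonempty fun i => Af i u)
      (fun u => Finset.univ.inf' Finset.univ_nonempty fun j => Bf j u) := by
    refine ⟨Ξ, Υ, hΞint.intervalIntegrable, hΥint.intervalIntegrable, ?_, ?_, ?_, ?_, ?_⟩
    · intro u _; have h := hΞid 0 u; simp only; linarith
    · intro u _; have h := hΥid 0 u; simp only; linarith
    · simp only
      apply Finset.le_inf'
      intro i _
      have h1 : (⨅ i, xbar i) ≤ xbar i := ciInf_le (Set.finite_range xbar).bddBelow i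
      have h3 : Af i 0 = x 0 i := hAeq i 0 ⟨le_refl _, hT.le⟩
      linarith [hx0 i]
    · simp only
      apply Finset.le_inf'
      intro j _
      have h1 : (⨅ j, ybar j) ≤ ybar j := ciInf_le (Set.finite_range ybar).bddBelow j
      have h3 : Bf j T = y T j := hBeq j T ⟨hT.le, le_refl _⟩
      linarith [hyT j]
    · filter_upwards [hae, ae_ne_point 0] with u hu hu0 huIcc
      have huIoc : u ∈ Ioc (0:ℝ) T := ⟨lt_of_le_of_ne huIcc.1 (Ne.symm hu0), huIcc.2⟩
      obtain ⟨hvf, hvg⟩ := hu huIcc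
      set Xu : ℝ := Finset.univ.inf' Finset.univ_nonempty fun i => Af i u with hXudef
      set Yu : ℝ := Finset.univ.inf' Finset.univ_nonempty fun j => Bf j u with hYudef
      have hXle : ∀ k, Xu ≤ x u k := fun k => by
        rw [← hAeq k u huIcc]; exact Finset.inf'_le _ (Finset.mem_univ k)
      have hYle : ∀ j, Yu ≤ y u j := fun j => by
        rw [← hBeq j u huIcc]; exact Finset.inf'_le _ (Finset.mem_univ j)
      constructor
      · obtain ⟨i₀, _, hXi, hΞi⟩ := hΞsel u
        have hΞeq : Ξ u = x' u i₀ := by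
          rw [hΞi, hαdef]; exact indicator_of_mem huIoc _
        have hXeq : Xu = x u i₀ := by rw [hXudef, hXi]; exact hAeq i₀ u huIcc
        calc (⨅ i, f u (fun _ => Xu) (fun _ => Yu) i)
            ≤ f u (fun _ => Xu) (fun _ => Yu) i₀ :=
              ciInf_le (Set.finite_range _).bddBelow i₀
          _ ≤ f u (x u) (y u) i₀ := hfmono u _ _ _ _ i₀ hXle hXeq hYle
          _ ≤ x' u i₀ := hvf i₀
          _ = Ξ u := hΞeq.symm
      · obtain ⟨j₀, _, hYj, hΥj⟩ := hΥsel u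
        have hΥeq : Υ u = y' u j₀ := by
          rw [hΥj, hβdef]; exact indicator_of_mem huIoc _
        have hYeq : Yu = y u j₀ := by rw [hYudef, hYj]; exact hBeq j₀ u huIcc
        calc Υ u = y' u j₀ := hΥeq
          _ ≤ g u (x u) (y u) j₀ := hvg j₀
          _ ≤ g u (fun _ => Xu) (fun _ => Yu) j₀ := hgmono u _ _ _ _ j₀ hXle hYle hYeq
          _ ≤ (⨆ j, g u (fun _ => Xu) (fun _ => Yu) j) :=
              le_ciSup (Set.finite_range _).bddAbove j₀
  obtain ⟨hCX, hCY⟩ := hC _ _ hsup1 t ht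
  constructor
  · intro i
    have h : (Finset.univ.inf' Finset.univ_nonempty fun i => Af i t) ≤ x t i := by
      rw [← hAeq i t ht]; exact Finset.inf'_le _ (Finset.mem_univ i)
    exact le_trans hCX h
  · intro j
    have h : (Finset.univ.inf' Finset.univ_nonempty fun j => Bf j t) ≤ y t j := by
      rw [← hBeq j t ht]; exact Finset.inf'_le _ (Finset.mem_univ j)
    exact le_trans hCY h
end
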